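/- arXiv:1812.02397 — 4 statements merged into one kernel-verified Lean document; each statement's English description precedes it below -/
import Mathlib

section
/- Given real coefficients m_{−n_f},…,m_{n_b} with m₀ = 1 and M(z) = Σ_{i=−n_f}^{n_b} m_i z^{−i}, for every z ∈ ℂ with |z| = 1 one has M(z)P(z) + conj(M(z)P(z)) = [x(z); 1]^* (M_fᵀ Π M_f) [x(z); 1], where x(z) = (zI−Ã)^{−1}B̃ ∈ ℂ^{(n_p+n)×1}, [x(z); 1] is the column vector in ℂ^{(n_p+n+1)×1} obtained by appending the entry 1, and ^* denotes conjugate transpose. -/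
open Matrix Finset

noncomputable section

/-- All eigenvalues of the real matrix `A` lie in the open unit disk. -/
def SpecInUnitDisk {k : ℕ} (A : Matrix (Fin k) (Fin k) ℝ) : Prop :=
  ∀ z : ℂ, z ∈ spectrum ℂ (A.map Complex.ofReal) → ‖z‖ < 1

/-- A real symmetric matrix is negative definite. -/
def NegDef {ι : Type} [Fintype ι] (M : Matrix ι ι ℝ) : Prop := (-M).PosDef

/-- Transfer function `C (zI - A)⁻¹ B + D` evaluated at `z ∈ ℂ`. -/
def tf {ng : ℕ} (Ag : Matrix (Fin ng) (Fin ng) ℝ) (Bg : Matrix (Fin ng) (Fin 1) ℝ)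
    (Cg : Matrix (Fin 1) (Fin ng) ℝ) (Dg : ℝ) (z : ℂ) : ℂ :=
  ((Cg.map Complex.ofReal) *
      (z • (1 : Matrix (Fin ng) (Fin ng) ℂ) - Ag.map Complex.ofReal)⁻¹ *
      (Bg.map Complex.ofReal)) 0 0 + (Dg : ℂ)

/-- The lifted matrix `Ã = [[A_p, B_p, 0],[0, 0, I_{n-1}],[0, 0, 0]]`. -/
def Atil (np n : ℕ) (Ap : Matrix (Fin np) (Fin np) ℝ) (Bp : Matrix (Fin np) (Fin 1) ℝ) :
    Matrix (Fin np ⊕ Fin n) (Fin np ⊕ Fin n) ℝ :=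
  Matrix.fromBlocks Ap
    (Matrix.of fun i (j : Fin n) => if (j : ℕ) = 0 then Bp i 0 else 0) 0
    (Matrix.of fun (i j : Fin n) => if (j : ℕ) = (i : ℕ) + 1 then (1 : ℝ) else 0)

/-- The lifted input matrix `B̃ = (0,…,0,1)ᵀ`. -/
def Btil (np n : ℕ) : Matrix (Fin np ⊕ Fin n) (Fin 1) ℝ :=
  Matrix.of fun i _ =>
    Sum.elim (fun _ => (0 : ℝ)) (fun j : Fin n => if (j : ℕ) = n - 1 then 1 else 0) i

/-- The row vector `C_n = [C_p, D_p, 0_{n-1}]`. -/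
def Cnrow (np n : ℕ) (Cp : Matrix (Fin 1) (Fin np) ℝ) (Dp : ℝ) :
    Matrix (Fin 1) (Fin np ⊕ Fin n) ℝ :=
  Matrix.of fun _ j =>
    Sum.elim (fun a => Cp 0 a) (fun b : Fin n => if (b : ℕ) = 0 then Dp else 0) j

/-- The row vector `C_{d,j}` whose only nonzero entry is a `1` in position
`n_p + n - j + 1` (1-based). -/
def Cdrow (np n : ℕ) (j : ℕ) : Matrix (Fin 1) (Fin np ⊕ Fin n) ℝ :=
  Matrix.of fun _ idx =>
    Sum.elim (fun _ => (0 : ℝ)) (fun r : Fin n => if (r : ℕ) = n - j then 1 else 0) idx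

/-- The rows `C_i`, `i = -n_f, …, n_b`:
`C_i = C_n Ã^{n-i} + Σ_{j=1}^{-i} (C_n Ã^{n-i-j-1} B̃) C_{d,j}` for `i < 0`,
and `C_i = C_n Ã^{n-i}` for `i ≥ 0`. -/
def Crow (np n : ℕ) (Ap : Matrix (Fin np) (Fin np) ℝ) (Bp : Matrix (Fin np) (Fin 1) ℝ)
    (Cp : Matrix (Fin 1) (Fin np) ℝ) (Dp : ℝ) (i : ℤ) :
    Matrix (Fin 1) (Fin np ⊕ Fin n) ℝ :=
  if i < 0 then
    Cnrow np n Cp Dp * (Atil np n Ap Bp) ^ (((n : ℤ) - i).toNat) +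
      ∑ j ∈ Finset.Icc 1 (-i).toNat,
        ((Cnrow np n Cp Dp * (Atil np n Ap Bp) ^ (((n : ℤ) - i - (j : ℤ) - 1).toNat) *
            Btil np n) 0 0) • Cdrow np n j
  else Cnrow np n Cp Dp * (Atil np n Ap Bp) ^ (((n : ℤ) - i).toNat)

/-- The scalars `D_i`: `D_i = C_n Ã^{n-i-1} B̃` for `i ≤ 0` and `D_i = 0` for
`i ≥ 1`. -/
def Dval (np n : ℕ) (Ap : Matrix (Fin np) (Fin np) ℝ) (Bp : Matrix (Fin np) (Fin 1) ℝ)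
    (Cp : Matrix (Fin 1) (Fin np) ℝ) (Dp : ℝ) (i : ℤ) : ℝ :=
  if i ≤ 0 then
    (Cnrow np n Cp Dp * (Atil np n Ap Bp) ^ (((n : ℤ) - i - 1).toNat) * Btil np n) 0 0
  else 0

/-- The coefficient column vector `m = (m_{-n_f},…,m_{-1},1,m_1,…,m_{n_b})ᵀ`. -/
def mvec (nf nb : ℕ) (mc : ℤ → ℝ) : Matrix (Fin (nf + nb + 1)) (Fin 1) ℝ :=
  Matrix.of fun k _ => mc ((k : ℤ) - (nf : ℤ))

/-- The matrix `Π = [[0, m],[mᵀ, 0]]`. -/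
def PiMat (nf nb : ℕ) (mc : ℤ → ℝ) :
    Matrix (Fin (nf + nb + 1) ⊕ Fin 1) (Fin (nf + nb + 1) ⊕ Fin 1) ℝ :=
  Matrix.fromBlocks 0 (mvec nf nb mc) (mvec nf nb mc)ᵀ 0

/-- The matrix `C` whose rows are `C_{-n_f},…,C_{n_b}`. -/
def Cmat (np n nf nb : ℕ) (Ap : Matrix (Fin np) (Fin np) ℝ)
    (Bp : Matrix (Fin np) (Fin 1) ℝ) (Cp : Matrix (Fin 1) (Fin np) ℝ) (Dp : ℝ) :
    Matrix (Fin (nf + nb + 1)) (Fin np ⊕ Fin n) ℝ :=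
  Matrix.of fun k j => Crow np n Ap Bp Cp Dp ((k : ℤ) - (nf : ℤ)) 0 j

/-- The column vector `(D_{-n_f},…,D_{n_b})ᵀ`. -/
def Dcol (np n nf nb : ℕ) (Ap : Matrix (Fin np) (Fin np) ℝ)
    (Bp : Matrix (Fin np) (Fin 1) ℝ) (Cp : Matrix (Fin 1) (Fin np) ℝ) (Dp : ℝ) :
    Matrix (Fin (nf + nb + 1)) (Fin 1) ℝ :=
  Matrix.of fun k _ => Dval np n Ap Bp Cp Dp ((k : ℤ) - (nf : ℤ))

/-- The matrix `M_f = [[C, D],[0, 1]]`. -/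
def MfMat (np n nf nb : ℕ) (Ap : Matrix (Fin np) (Fin np) ℝ)
    (Bp : Matrix (Fin np) (Fin 1) ℝ) (Cp : Matrix (Fin 1) (Fin np) ℝ) (Dp : ℝ) :
    Matrix (Fin (nf + nb + 1) ⊕ Fin 1) ((Fin np ⊕ Fin n) ⊕ Fin 1) ℝ :=
  Matrix.fromBlocks (Cmat np n nf nb Ap Bp Cp Dp) (Dcol np n nf nb Ap Bp Cp Dp) 0 1

/-- The KYP block matrix `[[ÃᵀXÃ−X, ÃᵀXB̃],[B̃ᵀXÃ, B̃ᵀXB̃]]`. -/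
def KYPblock (np n : ℕ) (Ap : Matrix (Fin np) (Fin np) ℝ)
    (Bp : Matrix (Fin np) (Fin 1) ℝ) (X : Matrix (Fin np ⊕ Fin n) (Fin np ⊕ Fin n) ℝ) :
    Matrix ((Fin np ⊕ Fin n) ⊕ Fin 1) ((Fin np ⊕ Fin n) ⊕ Fin 1) ℝ :=
  Matrix.fromBlocks
    ((Atil np n Ap Bp)ᵀ * X * Atil np n Ap Bp - X)
    ((Atil np n Ap Bp)ᵀ * X * Btil np n)
    ((Btil np n)ᵀ * X * Atil np n Ap Bp)
    ((Btil np n)ᵀ * X * Btil np n)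

namespace FIR

variable (np n : ℕ) (z : ℂ)
  (Ap : Matrix (Fin np) (Fin np) ℝ) (Bp : Matrix (Fin np) (Fin 1) ℝ)
  (Cp : Matrix (Fin 1) (Fin np) ℝ) (Dp : ℝ)

/-- complexified lifted matrix -/
def Ac : Matrix (Fin np ⊕ Fin n) (Fin np ⊕ Fin n) ℂ := (Atil np n Ap Bp).map Complex.ofReal

def bc : Fin np ⊕ Fin n → ℂ := fun i => ((Btil np n).map Complex.ofReal) i 0

def cn : Fin np ⊕ Fin n → ℂ := fun j => ((Cnrow np n Cp Dp).map Complex.ofReal) 0 j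

def dl (m : ℕ) : Fin np ⊕ Fin n → ℂ :=
  Sum.elim (fun _ => 0) (fun r : Fin n => if (r : ℕ) = m then 1 else 0)

def rh (v : Fin np → ℂ) : Fin np ⊕ Fin n → ℂ := Sum.elim v (fun _ => 0)

def xv : Fin np ⊕ Fin n → ℂ := Sum.elim
  (fun i => (((z • (1 : Matrix (Fin np) (Fin np) ℂ)) - Ap.map Complex.ofReal)⁻¹ *
      Bp.map Complex.ofReal) i 0 * z⁻¹ ^ n)
  (fun r : Fin n => z⁻¹ ^ (n - (r : ℕ)))

def mkc (l : ℕ) : ℂ :=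
  ((Cnrow np n Cp Dp * (Atil np n Ap Bp) ^ l * Btil np n) 0 0 : ℝ)

lemma bc_eq : bc np n = dl np n (n - 1) := by
  funext i
  cases i with
  | inl i => simp [bc, dl, Btil]
  | inr r => simp [bc, dl, Btil, apply_ite Complex.ofReal]

lemma Ac_mulVec_dl (m : ℕ) (hm : m + 1 < n) :
    (Ac np n Ap Bp) *ᵥ (dl np n (m + 1)) = dl np n m := by
  funext i
  have hmem : (⟨m + 1, hm⟩ : Fin n) ∈ Finset.univ := Finset.mem_univ _
  cases i with
  | inl i =>
    simp only [Ac, mulVec, dotProduct, Fintype.sum_sum_type, dl, Sum.elim_inl, Sum.elim_inr,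
      mul_zero, Finset.sum_const_zero, zero_add, Matrix.map_apply, Atil, fromBlocks_apply₁₂]
    rw [Finset.sum_eq_single (⟨m + 1, hm⟩ : Fin n)]
    · simp
    · intro b _ hb
      have : (b : ℕ) ≠ m + 1 := fun h => hb (Fin.ext h)
      simp [this]
    · simp
  | inr r =>
    simp only [Ac, mulVec, dotProduct, Fintype.sum_sum_type, dl, Sum.elim_inl, Sum.elim_inr,
      mul_zero, Finset.sum_const_zero, zero_add, Matrix.map_apply, Atil, fromBlocks_apply₂₂]
    rw [Finset.sum_eq_single (⟨m + 1, hm⟩ : Fin n)]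
    · by_cases h : (r : ℕ) = m
      · simp [h]
      · have : ¬ (m + 1 = (r : ℕ) + 1) := by omega
        simp [h, this, Ne.symm h]
    · intro b _ hb
      have : (b : ℕ) ≠ m + 1 := fun h => hb (Fin.ext h)
      simp [this]
    · simp

lemma Ac_mulVec_dl0 (hn1 : 1 ≤ n) :
    (Ac np n Ap Bp) *ᵥ (dl np n 0) = rh np n (fun p => (Bp p 0 : ℂ)) := by
  funext i
  have h0 : (0 : ℕ) < n := hn1
  cases i with
  | inl i =>
    simp only [Ac, mulVec, dotProduct, Fintype.sum_sum_type, dl, rh, Sum.elim_inl, Sum.elim_inr,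
      mul_zero, Finset.sum_const_zero, zero_add, Matrix.map_apply, Atil, fromBlocks_apply₁₂]
    rw [Finset.sum_eq_single (⟨0, h0⟩ : Fin n)]
    · simp
    · intro b _ hb
      have : (b : ℕ) ≠ 0 := fun h => hb (Fin.ext h)
      simp [this]
    · simp
  | inr r =>
    simp only [Ac, mulVec, dotProduct, Fintype.sum_sum_type, dl, rh, Sum.elim_inl, Sum.elim_inr,
      mul_zero, Finset.sum_const_zero, zero_add, Matrix.map_apply, Atil, fromBlocks_apply₂₂]
    rw [Finset.sum_eq_single (⟨0, h0⟩ : Fin n)]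
    · simp
    · intro b _ hb
      have : (b : ℕ) ≠ 0 := fun h => hb (Fin.ext h)
      simp [this]
    · simp

lemma Ac_mulVec_rh (v : Fin np → ℂ) :
    (Ac np n Ap Bp) *ᵥ (rh np n v) = rh np n ((Ap.map Complex.ofReal) *ᵥ v) := by
  funext i
  cases i with
  | inl i =>
    simp [Ac, mulVec, dotProduct, Fintype.sum_sum_type, rh, Matrix.map_apply, Atil]
  | inr r =>
    simp [Ac, mulVec, dotProduct, Fintype.sum_sum_type, rh, Matrix.map_apply, Atil]

lemma Ac_pow_low (l : ℕ) (hl : l ≤ n - 1) (hn1 : 1 ≤ n) :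
    ((Ac np n Ap Bp) ^ l) *ᵥ (bc np n) = dl np n (n - 1 - l) := by
  induction l with
  | zero => simpa using bc_eq np n
  | succ l ih =>
    have hl' : l ≤ n - 1 := Nat.le_of_succ_le hl
    have h1 : n - 1 - l = (n - 1 - (l + 1)) + 1 := by omega
    have h2 : (n - 1 - (l + 1)) + 1 < n := by omega
    rw [pow_succ', ← mulVec_mulVec, ih hl', h1, Ac_mulVec_dl np n Ap Bp _ h2]

lemma Ac_pow_high (r : ℕ) (hn1 : 1 ≤ n) :
    ((Ac np n Ap Bp) ^ (n + r)) *ᵥ (bc np n) =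
      rh np n (((Ap.map Complex.ofReal) ^ r) *ᵥ (fun p => (Bp p 0 : ℂ))) := by
  induction r with
  | zero =>
    have h : n + 0 = (n - 1) + 1 := by omega
    rw [h, pow_succ', ← mulVec_mulVec,
      Ac_pow_low np n Ap Bp (n - 1) le_rfl hn1]
    have : n - 1 - (n - 1) = 0 := by omega
    rw [this, Ac_mulVec_dl0 np n Ap Bp hn1]
    simp
  | succ r ih =>
    have h : n + (r + 1) = (n + r) + 1 := by omega
    rw [h, pow_succ', ← mulVec_mulVec, ih, Ac_mulVec_rh, pow_succ', ← mulVec_mulVec]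

lemma map_pow' {k : Type} [Fintype k] [DecidableEq k] (M : Matrix k k ℝ) (l : ℕ) :
    (M ^ l).map Complex.ofReal = (M.map Complex.ofReal) ^ l := by
  induction l with
  | zero => simp [Matrix.map_one]
  | succ l ih =>
    rw [show (Complex.ofReal : ℝ → ℂ) = ⇑Complex.ofRealHom from rfl] at *
    rw [pow_succ, pow_succ, Matrix.map_mul, ih]

lemma cn_dot_dl (m : ℕ) (hm : m < n) :
    dotProduct (cn np n Cp Dp) (dl np n m) = if m = 0 then (Dp : ℂ) else 0 := by
  simp only [dotProduct, cn, dl, Fintype.sum_sum_type, Sum.elim_inl, Sum.elim_inr,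
    mul_zero, Finset.sum_const_zero, zero_add, Matrix.map_apply, Cnrow, Matrix.of_apply]
  rw [Finset.sum_eq_single (⟨m, hm⟩ : Fin n)]
  · by_cases h : m = 0 <;> simp [h]
  · intro b _ hb
    have : (b : ℕ) ≠ m := fun h => hb (Fin.ext h)
    simp [this]
  · simp

lemma mkc_eq (l : ℕ) :
    mkc np n Ap Bp Cp Dp l =
      dotProduct (cn np n Cp Dp) (((Ac np n Ap Bp) ^ l) *ᵥ (bc np n)) := by
  have : ((Cnrow np n Cp Dp * (Atil np n Ap Bp) ^ l * Btil np n).map Complex.ofReal) 0 0 =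
      dotProduct (cn np n Cp Dp) (((Ac np n Ap Bp) ^ l) *ᵥ (bc np n)) := by
    rw [show (Complex.ofReal : ℝ → ℂ) = ⇑Complex.ofRealHom from rfl]
    rw [Matrix.mul_assoc, Matrix.map_mul, Matrix.map_mul]
    rw [show ⇑Complex.ofRealHom = (Complex.ofReal : ℝ → ℂ) from rfl, map_pow']
    simp only [cn, bc, Ac, dotProduct, mulVec, dotProduct, Matrix.mul_apply]
  simpa [mkc, Matrix.map_apply] using this

lemma mkc_lt (l : ℕ) (hl : l + 1 < n) : mkc np n Ap Bp Cp Dp l = 0 := by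
  rw [mkc_eq, Ac_pow_low np n Ap Bp l (by omega) (by omega),
    cn_dot_dl np n Cp Dp _ (by omega)]
  have : ¬ (n - 1 - l = 0) := by omega
  simp [this]

lemma mkc_top (hn1 : 1 ≤ n) : mkc np n Ap Bp Cp Dp (n - 1) = Dp := by
  rw [mkc_eq, Ac_pow_low np n Ap Bp (n - 1) le_rfl hn1, cn_dot_dl np n Cp Dp _ (by omega)]
  simp

lemma Mz_mulVec_xv (hn1 : 1 ≤ n) (hz0 : z ≠ 0)
    (hP : IsUnit (z • (1 : Matrix (Fin np) (Fin np) ℂ) - Ap.map Complex.ofReal).det) :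
    (z • (1 : Matrix (Fin np ⊕ Fin n) (Fin np ⊕ Fin n) ℂ) - Ac np n Ap Bp) *ᵥ
      (xv np n z Ap Bp) = bc np n := by
  have hzz : z * z⁻¹ = 1 := mul_inv_cancel₀ hz0
  funext i
  cases i with
  | inl i =>
    have h0 : (0 : ℕ) < n := hn1
    simp only [mulVec, dotProduct, Fintype.sum_sum_type, Matrix.sub_apply, Matrix.smul_apply,
      Ac, Matrix.map_apply, Atil, Matrix.of_apply, fromBlocks_apply₁₁, fromBlocks_apply₁₂,
      Matrix.one_apply, Sum.inl.injEq, xv, Sum.elim_inl, Sum.elim_inr, bc, Btil,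
      Sum.elim_inl, smul_eq_mul]
    have hsum2 : ∑ x : Fin n,
        ((z * if (Sum.inl i : Fin np ⊕ Fin n) = Sum.inr x then 1 else 0) -
            ((if (x : ℕ) = 0 then Bp i 0 else 0 : ℝ) : ℂ)) *
          z⁻¹ ^ (n - (x : ℕ)) =
        -(((Bp i 0 : ℝ) : ℂ) * z⁻¹ ^ n) := by
      rw [Finset.sum_eq_single (⟨0, h0⟩ : Fin n)]
      · simp
      · intro b _ hb
        have : (b : ℕ) ≠ 0 := fun h => hb (Fin.ext h)
        simp [this]
      · simp
    have hMY : (z • (1 : Matrix (Fin np) (Fin np) ℂ) - Ap.map Complex.ofReal) *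
        ((z • (1 : Matrix (Fin np) (Fin np) ℂ) - Ap.map Complex.ofReal)⁻¹ *
          Bp.map Complex.ofReal) = Bp.map Complex.ofReal := by
      rw [← Matrix.mul_assoc, Matrix.mul_nonsing_inv _ hP, Matrix.one_mul]
    have h2 := congrArg (fun M => M i 0 * z⁻¹ ^ n) hMY
    simp only [Matrix.mul_apply, Matrix.map_apply] at h2
    have hsum1 : ∑ x : Fin np,
        ((z * if i = x then 1 else 0) - ((Ap i x : ℝ) : ℂ)) *
          (((z • (1 : Matrix (Fin np) (Fin np) ℂ) - Ap.map Complex.ofReal)⁻¹ *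
            Bp.map Complex.ofReal) x 0 * z⁻¹ ^ n) = ((Bp i 0 : ℝ) : ℂ) * z⁻¹ ^ n := by
      calc ∑ x : Fin np,
          ((z * if i = x then 1 else 0) - ((Ap i x : ℝ) : ℂ)) *
            (((z • (1 : Matrix (Fin np) (Fin np) ℂ) - Ap.map Complex.ofReal)⁻¹ *
              Bp.map Complex.ofReal) x 0 * z⁻¹ ^ n)
          = (∑ x : Fin np,
            (z • (1 : Matrix (Fin np) (Fin np) ℂ) - Ap.map Complex.ofReal) i x *
              ((z • (1 : Matrix (Fin np) (Fin np) ℂ) - Ap.map Complex.ofReal)⁻¹ *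
                Bp.map Complex.ofReal) x 0) * z⁻¹ ^ n := by
            rw [Finset.sum_mul]
            refine Finset.sum_congr rfl fun x _ => ?_
            simp only [Matrix.sub_apply, Matrix.smul_apply, Matrix.one_apply,
              Matrix.map_apply, smul_eq_mul]
            ring
        _ = ((Bp i 0 : ℝ) : ℂ) * z⁻¹ ^ n := h2
    rw [hsum1, hsum2]
    simp
  | inr r =>
    simp only [mulVec, dotProduct, Fintype.sum_sum_type, Matrix.sub_apply, Matrix.smul_apply,
      Ac, Matrix.map_apply, Atil, Matrix.of_apply, fromBlocks_apply₂₁, fromBlocks_apply₂₂,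
      Matrix.one_apply, Matrix.zero_apply, xv, Sum.elim_inl, Sum.elim_inr, bc, Btil,
      smul_eq_mul]
    have hsum1 : ∑ x : Fin np,
        ((z * if (Sum.inr r : Fin np ⊕ Fin n) = Sum.inl x then 1 else 0) - ((0 : ℝ) : ℂ)) *
          (((z • (1 : Matrix (Fin np) (Fin np) ℂ) - Ap.map Complex.ofReal)⁻¹ *
            Bp.map Complex.ofReal) x 0 * z⁻¹ ^ n) = 0 := by
      refine Finset.sum_eq_zero fun x _ => by simp
    have hsum2 : ∑ x : Fin n,
        ((z * if (Sum.inr r : Fin np ⊕ Fin n) = Sum.inr x then 1 else 0) -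
            ((if (x : ℕ) = (r : ℕ) + 1 then (1 : ℝ) else 0 : ℝ) : ℂ)) *
          z⁻¹ ^ (n - (x : ℕ)) =
        z * z⁻¹ ^ (n - (r : ℕ)) -
          (if (r : ℕ) + 1 < n then z⁻¹ ^ (n - (r : ℕ) - 1) else 0) := by
      have e1 : ∀ x : Fin n,
          ((z * if (Sum.inr r : Fin np ⊕ Fin n) = Sum.inr x then 1 else 0) -
              ((if (x : ℕ) = (r : ℕ) + 1 then (1 : ℝ) else 0 : ℝ) : ℂ)) *
            z⁻¹ ^ (n - (x : ℕ)) =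
          (z * if r = x then 1 else 0) * z⁻¹ ^ (n - (x : ℕ)) -
            ((if (x : ℕ) = (r : ℕ) + 1 then (1 : ℂ) else 0)) * z⁻¹ ^ (n - (x : ℕ)) := by
        intro x
        by_cases h2 : r = x
        · subst h2
          have h : ¬ ((r : ℕ) = (r : ℕ) + 1) := by omega
          simp [h]
        · by_cases h : (x : ℕ) = (r : ℕ) + 1 <;> simp [h, h2] <;> ring
      rw [Finset.sum_congr rfl fun x _ => e1 x, Finset.sum_sub_distrib]
      congr 1
      · rw [Finset.sum_eq_single r]
        · simp
        · intro b _ hb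
          simp [(Ne.symm hb)]
        · simp
      · by_cases hlt : (r : ℕ) + 1 < n
        · rw [if_pos hlt, Finset.sum_eq_single (⟨(r : ℕ) + 1, hlt⟩ : Fin n)]
          · have : n - ((r : ℕ) + 1) = n - (r : ℕ) - 1 := by omega
            simp [this]
          · intro b _ hb
            have : (b : ℕ) ≠ (r : ℕ) + 1 := fun h => hb (Fin.ext h)
            simp [this]
          · simp
        · rw [if_neg hlt]
          refine Finset.sum_eq_zero fun x _ => ?_
          have : (x : ℕ) ≠ (r : ℕ) + 1 := by omega
          simp [this]
    rw [hsum1, hsum2, zero_add]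
    by_cases hr : (r : ℕ) = n - 1
    · have h2 : ¬ ((r : ℕ) + 1 < n) := by omega
      rw [if_neg h2, hr, sub_zero]
      have h1 : n - (n - 1) = 1 := by omega
      rw [h1, pow_one, hzz]
      simp
    · have h2 : (r : ℕ) + 1 < n := by omega
      rw [if_pos h2]
      obtain ⟨m, hm1, hm2⟩ : ∃ m, n - (r : ℕ) - 1 = m ∧ n - (r : ℕ) = m + 1 :=
        ⟨_, rfl, by omega⟩
      rw [hm1, hm2, pow_succ', ← mul_assoc, hzz, one_mul, sub_self]
      simp [hr]

lemma mulVec_sum' {k : Type} [Fintype k] (A : Matrix k k ℂ) (s : Finset ℕ) (f : ℕ → k → ℂ) :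
    A *ᵥ (∑ l ∈ s, f l) = ∑ l ∈ s, A *ᵥ (f l) := by
  classical
  induction s using Finset.induction with
  | empty => simp
  | insert _ _ h ih => rw [Finset.sum_insert h, Finset.sum_insert h, mulVec_add, ih]

lemma dotProduct_sum' {k : Type} [Fintype k] (v : k → ℂ) (s : Finset ℕ) (f : ℕ → k → ℂ) :
    dotProduct v (∑ l ∈ s, f l) = ∑ l ∈ s, dotProduct v (f l) := by
  classical
  induction s using Finset.induction with
  | empty => simp
  | insert _ _ h ih => rw [Finset.sum_insert h, Finset.sum_insert h, dotProduct_add, ih]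

lemma Ac_mulVec_xv (hn1 : 1 ≤ n) (hz0 : z ≠ 0)
    (hP : IsUnit (z • (1 : Matrix (Fin np) (Fin np) ℂ) - Ap.map Complex.ofReal).det) :
    (Ac np n Ap Bp) *ᵥ (xv np n z Ap Bp) = z • (xv np n z Ap Bp) - bc np n := by
  have h := Mz_mulVec_xv np n z Ap Bp hn1 hz0 hP
  rw [sub_mulVec, Matrix.smul_mulVec, one_mulVec, sub_eq_iff_eq_add] at h
  rw [h]
  abel

lemma Ac_pow_mulVec_xv (hn1 : 1 ≤ n) (hz0 : z ≠ 0)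
    (hP : IsUnit (z • (1 : Matrix (Fin np) (Fin np) ℂ) - Ap.map Complex.ofReal).det)
    (k : ℕ) :
    ((Ac np n Ap Bp) ^ k) *ᵥ (xv np n z Ap Bp) =
      z ^ k • (xv np n z Ap Bp) -
        ∑ l ∈ Finset.range k, z ^ l • (((Ac np n Ap Bp) ^ (k - 1 - l)) *ᵥ (bc np n)) := by
  induction k with
  | zero => simp
  | succ k ih =>
    rw [pow_succ', ← mulVec_mulVec, ih, mulVec_sub, Matrix.mulVec_smul,
      Ac_mulVec_xv np n z Ap Bp hn1 hz0 hP, mulVec_sum']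
    simp only [Matrix.mulVec_smul]
    rw [Finset.sum_range_succ]
    have hrw : ∀ l ∈ Finset.range k,
        z ^ l • ((Ac np n Ap Bp) *ᵥ (((Ac np n Ap Bp) ^ (k - 1 - l)) *ᵥ (bc np n))) =
        z ^ l • (((Ac np n Ap Bp) ^ (k + 1 - 1 - l)) *ᵥ (bc np n)) := by
      intro l hl
      have hl' : l < k := Finset.mem_range.mp hl
      have : k + 1 - 1 - l = (k - 1 - l) + 1 := by omega
      rw [this, pow_succ', ← mulVec_mulVec]
    rw [Finset.sum_congr rfl hrw]
    have : k + 1 - 1 - k = 0 := by omega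
    rw [this, pow_zero, one_mulVec]
    ext i
    simp only [Pi.smul_apply, Pi.sub_apply, Pi.add_apply, smul_eq_mul, Finset.sum_apply,
      pow_succ]
    ring

lemma cn_dot_xv (hn1 : 1 ≤ n) :
    dotProduct (cn np n Cp Dp) (xv np n z Ap Bp) = z⁻¹ ^ n * tf Ap Bp Cp Dp z := by
  simp only [dotProduct, cn, xv, Fintype.sum_sum_type, Sum.elim_inl, Sum.elim_inr,
    Matrix.map_apply, Cnrow, Matrix.of_apply]
  have h2 : ∑ r : Fin n, ((if (r : ℕ) = 0 then Dp else 0 : ℝ) : ℂ) * z⁻¹ ^ (n - (r : ℕ)) =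
      (Dp : ℂ) * z⁻¹ ^ n := by
    rw [Finset.sum_eq_single (⟨0, hn1⟩ : Fin n)]
    · simp
    · intro b _ hb
      have : (b : ℕ) ≠ 0 := fun h => hb (Fin.ext h)
      simp [this]
    · simp
  rw [h2]
  have h1 : ∑ p : Fin np, ((Cp 0 p : ℝ) : ℂ) *
      (((z • (1 : Matrix (Fin np) (Fin np) ℂ) - Ap.map Complex.ofReal)⁻¹ *
        Bp.map Complex.ofReal) p 0 * z⁻¹ ^ n) =
      (((Cp.map Complex.ofReal) *
        ((z • (1 : Matrix (Fin np) (Fin np) ℂ) - Ap.map Complex.ofReal)⁻¹ *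
          Bp.map Complex.ofReal)) 0 0) * z⁻¹ ^ n := by
    rw [Matrix.mul_apply, Finset.sum_mul]
    exact Finset.sum_congr rfl fun x _ => by rw [Matrix.map_apply]; ring
  rw [h1, ← Matrix.mul_assoc]
  simp only [tf]
  ring

lemma key_dot (hn1 : 1 ≤ n) (hz0 : z ≠ 0)
    (hP : IsUnit (z • (1 : Matrix (Fin np) (Fin np) ℂ) - Ap.map Complex.ofReal).det)
    (k : ℕ) :
    dotProduct (cn np n Cp Dp) (((Ac np n Ap Bp) ^ k) *ᵥ (xv np n z Ap Bp)) =
      z ^ k * (z⁻¹ ^ n * tf Ap Bp Cp Dp z) -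
        ∑ l ∈ Finset.range k, z ^ l * mkc np n Ap Bp Cp Dp (k - 1 - l) := by
  rw [Ac_pow_mulVec_xv np n z Ap Bp hn1 hz0 hP k, dotProduct_sub, dotProduct_sum']
  simp only [dotProduct_smul, smul_eq_mul]
  rw [cn_dot_xv np n z Ap Bp Cp Dp hn1]
  congr 1
  exact Finset.sum_congr rfl fun l _ => by
    rw [← mkc_eq np n Ap Bp Cp Dp (k - 1 - l)]

lemma cd_dot (j : ℕ) (h1 : 1 ≤ j) (h2 : j ≤ n) :
    dotProduct (fun idx => ((Cdrow np n j).map Complex.ofReal) 0 idx)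
      (xv np n z Ap Bp) = z⁻¹ ^ j := by
  simp only [dotProduct, Cdrow, xv, Fintype.sum_sum_type, Sum.elim_inl, Sum.elim_inr,
    Matrix.map_apply, Matrix.of_apply, Complex.ofReal_zero, zero_mul,
    Finset.sum_const_zero, zero_add]
  have hlt : n - j < n := by omega
  rw [Finset.sum_eq_single (⟨n - j, hlt⟩ : Fin n)]
  · have : n - (n - j) = j := by omega
    simp [this]
  · intro b _ hb
    have : (b : ℕ) ≠ n - j := fun h => hb (Fin.ext h)
    simp [this]
  · simp

lemma row_dot (M : Matrix (Fin np ⊕ Fin n) (Fin np ⊕ Fin n) ℝ) (v : Fin np ⊕ Fin n → ℂ) :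
    dotProduct (fun j => ((Cnrow np n Cp Dp * M).map Complex.ofReal) 0 j) v =
      dotProduct (cn np n Cp Dp) ((M.map Complex.ofReal) *ᵥ v) := by
  have h1 : (fun j => ((Cnrow np n Cp Dp * M).map Complex.ofReal) 0 j) =
      ((Cnrow np n Cp Dp).map Complex.ofReal 0) ᵥ* (M.map Complex.ofReal) := by
    funext j
    simp [Matrix.map_apply, Matrix.mul_apply, Matrix.vecMul, dotProduct]
  rw [h1, ← Matrix.dotProduct_mulVec]
  rfl

/-- value of row `i` against the state vector, plus the feedthrough. -/
def fval (i : ℤ) : ℂ :=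
  dotProduct (fun j => ((Crow np n Ap Bp Cp Dp i).map Complex.ofReal) 0 j)
    (xv np n z Ap Bp) + ((Dval np n Ap Bp Cp Dp i : ℝ) : ℂ)

lemma zpow_inv_eq (hz0 : z ≠ 0) (a b : ℕ) (hab : b ≤ a) :
    z ^ (a - b) * z⁻¹ ^ a = z⁻¹ ^ b := by
  have h : a = (a - b) + b := by omega
  calc z ^ (a - b) * z⁻¹ ^ a = z ^ (a - b) * (z⁻¹ ^ (a - b) * z⁻¹ ^ b) := by
        rw [← pow_add, ← h]
    _ = (z * z⁻¹) ^ (a - b) * z⁻¹ ^ b := by rw [mul_pow]; ring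
    _ = z⁻¹ ^ b := by rw [mul_inv_cancel₀ hz0, one_pow, one_mul]

lemma sum_Icc_one (N : ℕ) (f : ℕ → ℂ) :
    ∑ j ∈ Finset.Icc 1 N, f j = ∑ l ∈ Finset.range N, f (l + 1) := by
  have h1 : Finset.range (N + 1) = insert 0 (Finset.Icc 1 N) := by
    ext x
    simp only [Finset.mem_range, Finset.mem_insert, Finset.mem_Icc]
    omega
  have h2 : (0 : ℕ) ∉ Finset.Icc 1 N := by simp
  have h3 := Finset.sum_range_succ' f N
  rw [h1, Finset.sum_insert h2] at h3
  linear_combination h3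

lemma fval_eq (hn1 : 1 ≤ n) (hz0 : z ≠ 0)
    (hP : IsUnit (z • (1 : Matrix (Fin np) (Fin np) ℂ) - Ap.map Complex.ofReal).det)
    (i : ℤ) (hif : -(n : ℤ) ≤ i) (hib : i ≤ (n : ℤ)) :
    fval np n z Ap Bp Cp Dp i = z ^ (-i) * tf Ap Bp Cp Dp z +
      ∑ l ∈ Finset.range (-i).toNat,
        mkc np n Ap Bp Cp Dp (n + (-i).toNat - 2 - l) * (z⁻¹ ^ (l + 1) - z ^ (l + 1)) := by
  by_cases hi : i < 0
  · -- negative index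
    set i' : ℕ := (-i).toNat with hi'
    have hi1 : 1 ≤ i' := by omega
    have hi2 : i' ≤ n := by omega
    have hk : ((n : ℤ) - i).toNat = n + i' := by omega
    rw [fval, Crow, if_pos hi, hk]
    -- split the row into the main part and the correction sum
    have hsplit : (fun j => (((Cnrow np n Cp Dp * (Atil np n Ap Bp) ^ (n + i') +
        ∑ j' ∈ Finset.Icc 1 i',
          ((Cnrow np n Cp Dp * (Atil np n Ap Bp) ^ (((n : ℤ) - i - (j' : ℤ) - 1).toNat) *
            Btil np n) 0 0) • Cdrow np n j').map Complex.ofReal) 0 j)) =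
        (fun j => ((Cnrow np n Cp Dp * (Atil np n Ap Bp) ^ (n + i')).map Complex.ofReal) 0 j) +
        (fun j => ∑ j' ∈ Finset.Icc 1 i',
          ((mkc np n Ap Bp Cp Dp (n + i' - 1 - j')) *
            ((Cdrow np n j').map Complex.ofReal 0 j))) := by
      funext j
      simp only [Matrix.map_apply, Matrix.add_apply, Matrix.sum_apply, Matrix.smul_apply,
        smul_eq_mul, Pi.add_apply, Complex.ofReal_add, Complex.ofReal_sum, Complex.ofReal_mul]
      congr 1
      refine Finset.sum_congr rfl fun j' hj' => ?_
      have hj'1 : 1 ≤ j' := (Finset.mem_Icc.mp hj').1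
      have hj'2 : j' ≤ i' := (Finset.mem_Icc.mp hj').2
      have : (((n : ℤ) - i - (j' : ℤ) - 1).toNat) = n + i' - 1 - j' := by omega
      rw [this, mkc]
    rw [hsplit, add_dotProduct, row_dot]
    -- the correction sum
    have hcorr : dotProduct (fun j => ∑ j' ∈ Finset.Icc 1 i',
          ((mkc np n Ap Bp Cp Dp (n + i' - 1 - j')) *
            ((Cdrow np n j').map Complex.ofReal 0 j))) (xv np n z Ap Bp) =
        ∑ j' ∈ Finset.Icc 1 i', mkc np n Ap Bp Cp Dp (n + i' - 1 - j') * z⁻¹ ^ j' := by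
      simp only [dotProduct, Finset.sum_mul, Finset.mul_sum]
      rw [Finset.sum_comm]
      refine Finset.sum_congr rfl fun j' hj' => ?_
      have hj'1 : 1 ≤ j' := (Finset.mem_Icc.mp hj').1
      have hj'2 : j' ≤ i' := (Finset.mem_Icc.mp hj').2
      have := cd_dot np n z Ap Bp j' hj'1 (le_trans hj'2 hi2)
      simp only [dotProduct] at this
      simp only [mul_assoc]
      rw [← Finset.mul_sum, this]
    rw [hcorr, map_pow',
      show ((Atil np n Ap Bp).map Complex.ofReal) = Ac np n Ap Bp from rfl,
      key_dot np n z Ap Bp Cp Dp hn1 hz0 hP (n + i')]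
    -- Dval
    have hD : ((Dval np n Ap Bp Cp Dp i : ℝ) : ℂ) = mkc np n Ap Bp Cp Dp (n + i' - 1) := by
      have harg : ((n : ℤ) - i - 1).toNat = n + i' - 1 := by omega
      rw [Dval, if_pos (le_of_lt hi), harg, mkc]
    rw [hD]
    -- trim the big sum
    have htrim : ∑ l ∈ Finset.range (n + i'), z ^ l * mkc np n Ap Bp Cp Dp (n + i' - 1 - l) =
        ∑ l ∈ Finset.range (i' + 1), z ^ l * mkc np n Ap Bp Cp Dp (n + i' - 1 - l) := by
      refine (Finset.sum_subset ?_ ?_).symm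
      · intro l hl
        simp only [Finset.mem_range] at hl ⊢
        omega
      · intro l hl hl2
        simp only [Finset.mem_range] at hl hl2
        have : mkc np n Ap Bp Cp Dp (n + i' - 1 - l) = 0 := by
          refine mkc_lt np n Ap Bp Cp Dp _ (by omega)
        rw [this, mul_zero]
    rw [htrim, Finset.sum_range_succ']
    simp only [pow_zero, one_mul, Nat.sub_zero]
    -- reindex the Icc sum
    have hIcc : ∑ j' ∈ Finset.Icc 1 i', mkc np n Ap Bp Cp Dp (n + i' - 1 - j') * z⁻¹ ^ j' =
        ∑ l ∈ Finset.range i', mkc np n Ap Bp Cp Dp (n + i' - 2 - l) * z⁻¹ ^ (l + 1) := by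
      rw [sum_Icc_one i' (fun j => mkc np n Ap Bp Cp Dp (n + i' - 1 - j) * z⁻¹ ^ j)]
      refine Finset.sum_congr rfl fun l _ => ?_
      have h1 : n + i' - 1 - (l + 1) = n + i' - 2 - l := by omega
      rw [h1]
    rw [hIcc]
    have hzp : z ^ (n + i') * (z⁻¹ ^ n * tf Ap Bp Cp Dp z) = z ^ (-i) * tf Ap Bp Cp Dp z := by
      have h1 : z ^ (-i) = z ^ i' := by
        rw [show (-i) = ((i' : ℕ) : ℤ) by omega, zpow_natCast]
      have h3 : z ^ n * z⁻¹ ^ n = 1 := by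
        rw [← mul_pow, mul_inv_cancel₀ hz0, one_pow]
      rw [h1, pow_add]
      calc z ^ n * z ^ i' * (z⁻¹ ^ n * tf Ap Bp Cp Dp z)
          = (z ^ n * z⁻¹ ^ n) * (z ^ i' * tf Ap Bp Cp Dp z) := by ring
        _ = z ^ i' * tf Ap Bp Cp Dp z := by rw [h3, one_mul]
    rw [← hzp]
    have hcongr : ∑ l ∈ Finset.range i', z ^ (l + 1) *
          mkc np n Ap Bp Cp Dp (n + i' - 1 - (l + 1)) =
        ∑ l ∈ Finset.range i', z ^ (l + 1) * mkc np n Ap Bp Cp Dp (n + i' - 2 - l) := by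
      refine Finset.sum_congr rfl fun l _ => ?_
      have : n + i' - 1 - (l + 1) = n + i' - 2 - l := by omega
      rw [this]
    rw [hcongr]
    have hsplit2 : ∑ l ∈ Finset.range i',
        mkc np n Ap Bp Cp Dp (n + i' - 2 - l) * (z⁻¹ ^ (l + 1) - z ^ (l + 1)) =
        (∑ l ∈ Finset.range i', mkc np n Ap Bp Cp Dp (n + i' - 2 - l) * z⁻¹ ^ (l + 1)) -
          ∑ l ∈ Finset.range i', mkc np n Ap Bp Cp Dp (n + i' - 2 - l) * z ^ (l + 1) := by
      rw [← Finset.sum_sub_distrib]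
      exact Finset.sum_congr rfl fun l _ => by ring
    rw [hsplit2]
    have hcomm : ∑ l ∈ Finset.range i',
        z ^ (l + 1) * mkc np n Ap Bp Cp Dp (n + i' - 2 - l) =
        ∑ l ∈ Finset.range i', mkc np n Ap Bp Cp Dp (n + i' - 2 - l) * z ^ (l + 1) :=
      Finset.sum_congr rfl fun l _ => mul_comm _ _
    rw [hcomm]
    ring
  · -- nonnegative index
    push_neg at hi
    have hi0 : (-i).toNat = 0 := by omega
    rw [fval, Crow, if_neg (by omega), hi0]
    rw [row_dot, map_pow',
      show ((Atil np n Ap Bp).map Complex.ofReal) = Ac np n Ap Bp from rfl,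
      key_dot np n z Ap Bp Cp Dp hn1 hz0 hP]
    by_cases h0 : i = 0
    · subst h0
      simp only [Finset.range_zero, Finset.sum_empty, add_zero, neg_zero, zpow_zero, one_mul]
      have hk : ((n : ℤ) - 0).toNat = n := by omega
      rw [hk]
      have hD : ((Dval np n Ap Bp Cp Dp 0 : ℝ) : ℂ) = mkc np n Ap Bp Cp Dp (n - 1) := by
        have harg : ((n : ℤ) - 0 - 1).toNat = n - 1 := by omega
        rw [Dval, if_pos (le_refl 0), harg, mkc]
      rw [hD]
      have hsum : ∑ l ∈ Finset.range n, z ^ l * mkc np n Ap Bp Cp Dp (n - 1 - l) =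
          mkc np n Ap Bp Cp Dp (n - 1) := by
        rw [Finset.sum_eq_single_of_mem 0 (Finset.mem_range.mpr hn1)]
        · simp
        · intro l hl hl0
          simp only [Finset.mem_range] at hl
          have : mkc np n Ap Bp Cp Dp (n - 1 - l) = 0 :=
            mkc_lt np n Ap Bp Cp Dp _ (by omega)
          rw [this, mul_zero]
      rw [hsum]
      have h4 : z ^ n * z⁻¹ ^ n = 1 := by rw [← mul_pow, mul_inv_cancel₀ hz0, one_pow]
      linear_combination tf Ap Bp Cp Dp z * h4
    · have hi1 : 1 ≤ i := by omega
      set m : ℕ := i.toNat with hm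
      have hm1 : 1 ≤ m := by omega
      have hm2 : m ≤ n := by omega
      have hk : ((n : ℤ) - i).toNat = n - m := by omega
      rw [hk]
      have hD : ((Dval np n Ap Bp Cp Dp i : ℝ) : ℂ) = 0 := by
        rw [Dval, if_neg (by omega)]
        simp
      rw [hD]
      have hsum : ∑ l ∈ Finset.range (n - m), z ^ l * mkc np n Ap Bp Cp Dp (n - m - 1 - l)
          = 0 := by
        refine Finset.sum_eq_zero fun l hl => ?_
        simp only [Finset.mem_range] at hl
        have : mkc np n Ap Bp Cp Dp (n - m - 1 - l) = 0 :=
          mkc_lt np n Ap Bp Cp Dp _ (by omega)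
        rw [this, mul_zero]
      rw [hsum]
      have hzp : z ^ (n - m) * z⁻¹ ^ n = z⁻¹ ^ m := zpow_inv_eq z hz0 n m hm2
      have h1 : z ^ (-i) = z⁻¹ ^ m := by
        rw [show (-i) = -((m : ℕ) : ℤ) by omega, _root_.zpow_neg, zpow_natCast, inv_pow]
      rw [Finset.range_zero, Finset.sum_empty, add_zero, h1, ← hzp]
      ring

lemma hAp_unit (hAp : SpecInUnitDisk Ap) (hz : ‖z‖ = 1) :
    IsUnit (z • (1 : Matrix (Fin np) (Fin np) ℂ) - Ap.map Complex.ofReal).det := by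
  have hzs : z ∉ spectrum ℂ (Ap.map Complex.ofReal) := by
    intro h
    have h2 := hAp z h
    rw [hz] at h2
    exact lt_irrefl _ h2
  have h2 := spectrum.notMem_iff.mp hzs
  rw [Algebra.algebraMap_eq_smul_one] at h2
  exact (Matrix.isUnit_iff_isUnit_det _).mp h2

lemma hMz_unit (hz0 : z ≠ 0)
    (hP : IsUnit (z • (1 : Matrix (Fin np) (Fin np) ℂ) - Ap.map Complex.ofReal).det) :
    IsUnit ((z • (1 : Matrix (Fin np ⊕ Fin n) (Fin np ⊕ Fin n) ℂ) -
      Ac np n Ap Bp)).det := by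
  have hblock : z • (1 : Matrix (Fin np ⊕ Fin n) (Fin np ⊕ Fin n) ℂ) - Ac np n Ap Bp =
      Matrix.fromBlocks (z • (1 : Matrix (Fin np) (Fin np) ℂ) - Ap.map Complex.ofReal)
        (Matrix.of fun i (j : Fin n) => if (j : ℕ) = 0 then -((Bp i 0 : ℝ) : ℂ) else 0) 0
        (Matrix.of fun (i j : Fin n) =>
          (z * (if i = j then 1 else 0)) - (if (j : ℕ) = (i : ℕ) + 1 then 1 else 0)) := by
    ext i j
    cases i with
    | inl i =>
      cases j with
      | inl j =>
        simp [Ac, Atil, Matrix.map_apply, Matrix.one_apply, Sum.inl.injEq,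
          Matrix.sub_apply, Matrix.smul_apply, fromBlocks_apply₁₁, smul_eq_mul]
      | inr j =>
        by_cases h : (j : ℕ) = 0 <;>
          simp [Ac, Atil, Matrix.map_apply, Matrix.one_apply, h,
            Matrix.sub_apply, Matrix.smul_apply, fromBlocks_apply₁₂, smul_eq_mul]
    | inr i =>
      cases j with
      | inl j =>
        simp [Ac, Atil, Matrix.map_apply, Matrix.one_apply,
          Matrix.sub_apply, Matrix.smul_apply, fromBlocks_apply₂₁, smul_eq_mul]
      | inr j =>
        rcases eq_or_ne i j with h | h
        · subst h
          have h2 : ¬ ((i : ℕ) = (i : ℕ) + 1) := by omega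
          simp [Ac, Atil, Matrix.map_apply, Matrix.one_apply, h2,
            Matrix.sub_apply, Matrix.smul_apply, fromBlocks_apply₂₂, smul_eq_mul]
        · by_cases h2 : (j : ℕ) = (i : ℕ) + 1 <;>
            simp [Ac, Atil, Matrix.map_apply, Matrix.one_apply, h, h2,
              Matrix.sub_apply, Matrix.smul_apply, fromBlocks_apply₂₂, smul_eq_mul]
  rw [hblock, Matrix.det_fromBlocks_zero₂₁]
  refine hP.mul ?_
  have hdet : (Matrix.of fun (i j : Fin n) =>
      (z * (if i = j then 1 else 0)) - (if (j : ℕ) = (i : ℕ) + 1 then 1 else 0)).det =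
      z ^ n := by
    rw [Matrix.det_of_upperTriangular (by
      intro i j hij
      have h1 : ¬ (i = j) := by
        intro h
        rw [h] at hij
        exact lt_irrefl _ hij
      have h2 : ¬ ((j : ℕ) = (i : ℕ) + 1) := by
        have : (j : ℕ) < (i : ℕ) := hij
        omega
      simp [h1, h2])]
    have : ∀ i : Fin n, (Matrix.of fun (i j : Fin n) =>
        (z * (if i = j then 1 else 0)) - (if (j : ℕ) = (i : ℕ) + 1 then 1 else 0)) i i = z := by
      intro i
      have : ¬ ((i : ℕ) = (i : ℕ) + 1) := by omega
      simp [this]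
    rw [Finset.prod_congr rfl fun i _ => this i]
    simp
  rw [hdet]
  exact (isUnit_iff_ne_zero.mpr hz0).pow n

lemma inv_col (hn1 : 1 ≤ n) (hz0 : z ≠ 0)
    (hP : IsUnit (z • (1 : Matrix (Fin np) (Fin np) ℂ) - Ap.map Complex.ofReal).det) :
    (fun i => ((z • (1 : Matrix (Fin np ⊕ Fin n) (Fin np ⊕ Fin n) ℂ) -
        (Atil np n Ap Bp).map Complex.ofReal)⁻¹ *
        ((Btil np n).map Complex.ofReal)) i 0) = xv np n z Ap Bp := by
  have hMz := hMz_unit np n z Ap Bp hz0 hP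
  have h1 := Mz_mulVec_xv np n z Ap Bp hn1 hz0 hP
  funext i
  have h2 : ((z • (1 : Matrix (Fin np ⊕ Fin n) (Fin np ⊕ Fin n) ℂ) -
      (Atil np n Ap Bp).map Complex.ofReal)⁻¹ *
      ((Btil np n).map Complex.ofReal)) i 0 =
      ((z • (1 : Matrix (Fin np ⊕ Fin n) (Fin np ⊕ Fin n) ℂ) -
        Ac np n Ap Bp)⁻¹ *ᵥ (bc np n)) i := by
    simp [Matrix.mul_apply, mulVec, dotProduct, bc, Ac]
  rw [h2, ← h1, mulVec_mulVec, Matrix.nonsing_inv_mul _ hMz, one_mulVec]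

lemma rhs_eq (nf nb : ℕ) (mc : ℤ → ℝ) :
    dotProduct (star (Sum.elim (xv np n z Ap Bp) (fun _ : Fin 1 => (1 : ℂ))))
      ((((MfMat np n nf nb Ap Bp Cp Dp)ᵀ * PiMat nf nb mc *
        MfMat np n nf nb Ap Bp Cp Dp).map Complex.ofReal) *ᵥ
        (Sum.elim (xv np n z Ap Bp) (fun _ : Fin 1 => (1 : ℂ)))) =
    (∑ k : Fin (nf + nb + 1), ((mc ((k : ℤ) - (nf : ℤ)) : ℝ) : ℂ) *
        fval np n z Ap Bp Cp Dp ((k : ℤ) - (nf : ℤ))) +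
      (starRingEnd ℂ) (∑ k : Fin (nf + nb + 1), ((mc ((k : ℤ) - (nf : ℤ)) : ℝ) : ℂ) *
        fval np n z Ap Bp Cp Dp ((k : ℤ) - (nf : ℤ))) := by
  have hM : (MfMat np n nf nb Ap Bp Cp Dp)ᵀ * PiMat nf nb mc * MfMat np n nf nb Ap Bp Cp Dp =
      Matrix.fromBlocks 0
        ((Cmat np n nf nb Ap Bp Cp Dp)ᵀ * mvec nf nb mc)
        ((mvec nf nb mc)ᵀ * Cmat np n nf nb Ap Bp Cp Dp)
        ((mvec nf nb mc)ᵀ * Dcol np n nf nb Ap Bp Cp Dp +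
          (Dcol np n nf nb Ap Bp Cp Dp)ᵀ * mvec nf nb mc) := by
    rw [MfMat, PiMat, fromBlocks_transpose, fromBlocks_multiply, fromBlocks_multiply]
    simp [Matrix.mul_zero, Matrix.zero_mul, Matrix.mul_one, Matrix.one_mul]
  rw [hM, fromBlocks_map, fromBlocks_mulVec]
  simp only [Sum.elim_comp_inl, Sum.elim_comp_inr]
  have hstar : star (Sum.elim (xv np n z Ap Bp) (fun _ : Fin 1 => (1 : ℂ))) =
      Sum.elim (star (xv np n z Ap Bp)) (fun _ : Fin 1 => (1 : ℂ)) := by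
    funext i
    cases i <;> simp [Pi.star_apply]
  rw [hstar, sumElim_dotProduct_sumElim]
  have hzero : ((0 : Matrix (Fin np ⊕ Fin n) (Fin np ⊕ Fin n) ℝ).map Complex.ofReal) = 0 := by
    ext i j
    simp
  rw [hzero, Matrix.zero_mulVec, zero_add, dotProduct_add]
  -- names for the three pieces
  have hP2 : dotProduct (fun _ : Fin 1 => (1 : ℂ))
      ((((mvec nf nb mc)ᵀ * Cmat np n nf nb Ap Bp Cp Dp).map Complex.ofReal) *ᵥ
        (xv np n z Ap Bp)) =
      ∑ k : Fin (nf + nb + 1), ((mc ((k : ℤ) - (nf : ℤ)) : ℝ) : ℂ) *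
        dotProduct (fun j => ((Crow np n Ap Bp Cp Dp ((k : ℤ) - (nf : ℤ))).map
          Complex.ofReal) 0 j) (xv np n z Ap Bp) := by
    simp only [dotProduct, mulVec, Fin.sum_univ_one, one_mul, Matrix.map_apply,
      Matrix.mul_apply, Matrix.transpose_apply, mvec, Cmat, Matrix.of_apply,
      Complex.ofReal_sum, Complex.ofReal_mul, Finset.sum_mul]
    rw [Finset.sum_comm]
    refine Finset.sum_congr rfl fun k _ => ?_
    rw [Finset.mul_sum]
    exact Finset.sum_congr rfl fun j _ => by ring
  have hP1 : dotProduct (star (xv np n z Ap Bp))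
      ((((Cmat np n nf nb Ap Bp Cp Dp)ᵀ * mvec nf nb mc).map Complex.ofReal) *ᵥ
        (fun _ : Fin 1 => (1 : ℂ))) =
      ∑ k : Fin (nf + nb + 1), ((mc ((k : ℤ) - (nf : ℤ)) : ℝ) : ℂ) *
        (starRingEnd ℂ) (dotProduct (fun j => ((Crow np n Ap Bp Cp Dp ((k : ℤ) - (nf : ℤ))).map
          Complex.ofReal) 0 j) (xv np n z Ap Bp)) := by
    simp only [dotProduct, mulVec, Fin.sum_univ_one, mul_one, Matrix.map_apply,
      Matrix.mul_apply, Matrix.transpose_apply, mvec, Cmat, Matrix.of_apply,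
      Complex.ofReal_sum, Complex.ofReal_mul, Finset.sum_mul, map_sum, _root_.map_mul,
      Complex.conj_ofReal, Pi.star_apply, Finset.mul_sum, RCLike.star_def]
    rw [Finset.sum_comm]
    refine Finset.sum_congr rfl fun k _ => Finset.sum_congr rfl fun j _ => ?_
    ring
  have hP3 : dotProduct (fun _ : Fin 1 => (1 : ℂ))
      ((((mvec nf nb mc)ᵀ * Dcol np n nf nb Ap Bp Cp Dp +
        (Dcol np n nf nb Ap Bp Cp Dp)ᵀ * mvec nf nb mc).map Complex.ofReal) *ᵥ
        (fun _ : Fin 1 => (1 : ℂ))) =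
      (∑ k : Fin (nf + nb + 1), ((mc ((k : ℤ) - (nf : ℤ)) : ℝ) : ℂ) *
        ((Dval np n Ap Bp Cp Dp ((k : ℤ) - (nf : ℤ)) : ℝ) : ℂ)) +
      (∑ k : Fin (nf + nb + 1), ((mc ((k : ℤ) - (nf : ℤ)) : ℝ) : ℂ) *
        ((Dval np n Ap Bp Cp Dp ((k : ℤ) - (nf : ℤ)) : ℝ) : ℂ)) := by
    simp only [dotProduct, mulVec, Fin.sum_univ_one, mul_one, one_mul, Matrix.map_apply,
      Matrix.add_apply, Matrix.mul_apply, Matrix.transpose_apply, mvec, Dcol,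
      Matrix.of_apply, Complex.ofReal_add, Complex.ofReal_sum, Complex.ofReal_mul]
    congr 1
    exact Finset.sum_congr rfl fun k _ => by ring
  rw [hP1, hP2, hP3]
  simp only [fval, _root_.map_mul, map_add, map_sum, Complex.conj_ofReal, mul_add,
    Finset.sum_add_distrib]
  ring

lemma conj_mkc (l : ℕ) :
    (starRingEnd ℂ) (mkc np n Ap Bp Cp Dp l) = mkc np n Ap Bp Cp Dp l := by
  rw [mkc, Complex.conj_ofReal]

lemma reindex_sum (nf nb : ℕ) (F : ℤ → ℂ) :
    ∑ k : Fin (nf + nb + 1), F ((k : ℤ) - (nf : ℤ)) =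
      ∑ i ∈ Finset.Icc (-(nf : ℤ)) (nb : ℤ), F i := by
  refine Finset.sum_bij' (fun (k : Fin (nf + nb + 1)) _ => (k : ℤ) - (nf : ℤ))
    (fun i hi => (⟨(i + (nf : ℤ)).toNat, by
      simp only [Finset.mem_Icc] at hi
      omega⟩ : Fin (nf + nb + 1))) ?_ ?_ ?_ ?_ ?_
  · intro k _
    have := k.isLt
    simp only [Finset.mem_Icc]
    omega
  · intro i hi
    exact Finset.mem_univ _
  · intro k hk
    have := k.isLt
    apply Fin.ext
    simp only
    omega
  · intro i hi
    simp only [Finset.mem_Icc] at hi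
    simp only
    omega
  · intro k _
    rfl

end FIR
/-- on the unit circle, `M(z)P(z) + conj(M(z)P(z))` equals the value of
the Hermitian form of `M_fᵀ Π M_f` at the vector `[x(z); 1]`,
`x(z) = (zI - Ã)⁻¹ B̃`. -/
theorem fir_positivity_quadratic_form (np nf nb : ℕ) (n : ℕ) (hn : n = max nf nb)
    (hn1 : 1 ≤ n)
    (Ap : Matrix (Fin np) (Fin np) ℝ) (hAp : SpecInUnitDisk Ap)
    (Bp : Matrix (Fin np) (Fin 1) ℝ) (Cp : Matrix (Fin 1) (Fin np) ℝ) (Dp : ℝ)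
    (mc : ℤ → ℝ) (hm0 : mc 0 = 1)
    (z : ℂ) (hz : ‖z‖ = 1)
    (xz1 : (Fin np ⊕ Fin n) ⊕ Fin 1 → ℂ)
    (hxz1 : xz1 = Sum.elim
      (fun i => ((z • (1 : Matrix (Fin np ⊕ Fin n) (Fin np ⊕ Fin n) ℂ)
          - (Atil np n Ap Bp).map Complex.ofReal)⁻¹ *
          ((Btil np n).map Complex.ofReal)) i 0) (fun _ => (1 : ℂ))) :
    (∑ i ∈ Finset.Icc (-(nf : ℤ)) (nb : ℤ), (mc i : ℂ) * z ^ (-i)) * tf Ap Bp Cp Dp z +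
        (starRingEnd ℂ)
          ((∑ i ∈ Finset.Icc (-(nf : ℤ)) (nb : ℤ), (mc i : ℂ) * z ^ (-i)) *
            tf Ap Bp Cp Dp z) =
      dotProduct (star xz1)
        ((((MfMat np n nf nb Ap Bp Cp Dp)ᵀ * PiMat nf nb mc *
            MfMat np n nf nb Ap Bp Cp Dp).map Complex.ofReal).mulVec xz1) := by
  classical
  have hz0 : z ≠ 0 := by
    intro h
    rw [h, norm_zero] at hz
    exact one_ne_zero hz.symm
  have hP := FIR.hAp_unit np z Ap hAp hz
  have hnf : nf ≤ n := by omega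
  have hnb : nb ≤ n := by omega
  have hzc : (starRingEnd ℂ) z = z⁻¹ :=
    (Complex.inv_eq_conj hz).symm
  have hx : xz1 = Sum.elim (FIR.xv np n z Ap Bp) (fun _ : Fin 1 => 1) := by
    rw [hxz1, FIR.inv_col np n z Ap Bp hn1 hz0 hP]
  rw [hx, FIR.rhs_eq np n z Ap Bp Cp Dp nf nb mc]
  set G : ℂ := ∑ k : Fin (nf + nb + 1), ((mc ((k : ℤ) - (nf : ℤ)) : ℝ) : ℂ) *
    ∑ l ∈ Finset.range ((-((k : ℤ) - (nf : ℤ))).toNat),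
      FIR.mkc np n Ap Bp Cp Dp (n + (-((k : ℤ) - (nf : ℤ))).toNat - 2 - l) *
        (z⁻¹ ^ (l + 1) - z ^ (l + 1)) with hG
  have hs : ∑ k : Fin (nf + nb + 1), ((mc ((k : ℤ) - (nf : ℤ)) : ℝ) : ℂ) *
      FIR.fval np n z Ap Bp Cp Dp ((k : ℤ) - (nf : ℤ)) =
      (∑ i ∈ Finset.Icc (-(nf : ℤ)) (nb : ℤ), (mc i : ℂ) * z ^ (-i)) *
        tf Ap Bp Cp Dp z + G := by
    have h1 : ∀ k : Fin (nf + nb + 1),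
        FIR.fval np n z Ap Bp Cp Dp ((k : ℤ) - (nf : ℤ)) =
        z ^ (-((k : ℤ) - (nf : ℤ))) * tf Ap Bp Cp Dp z +
          ∑ l ∈ Finset.range ((-((k : ℤ) - (nf : ℤ))).toNat),
            FIR.mkc np n Ap Bp Cp Dp (n + (-((k : ℤ) - (nf : ℤ))).toNat - 2 - l) *
              (z⁻¹ ^ (l + 1) - z ^ (l + 1)) := by
      intro k
      have := k.isLt
      exact FIR.fval_eq np n z Ap Bp Cp Dp hn1 hz0 hP _ (by omega) (by omega)
    rw [Finset.sum_congr rfl fun k _ => by rw [h1 k]]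
    simp only [mul_add]
    rw [Finset.sum_add_distrib]
    congr 1
    have h2 : ∀ k : Fin (nf + nb + 1),
        ((mc ((k : ℤ) - (nf : ℤ)) : ℝ) : ℂ) *
          (z ^ (-((k : ℤ) - (nf : ℤ))) * tf Ap Bp Cp Dp z) =
        (((mc ((k : ℤ) - (nf : ℤ)) : ℝ) : ℂ) * z ^ (-((k : ℤ) - (nf : ℤ)))) *
          tf Ap Bp Cp Dp z := fun k => by ring
    rw [Finset.sum_congr rfl fun k _ => h2 k, ← Finset.sum_mul,
      FIR.reindex_sum nf nb (fun i => (mc i : ℂ) * z ^ (-i))]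
  have hGconj : (starRingEnd ℂ) G = -G := by
    rw [hG]
    rw [map_sum, ← Finset.sum_neg_distrib]
    refine Finset.sum_congr rfl fun k _ => ?_
    rw [_root_.map_mul, Complex.conj_ofReal, map_sum, ← mul_neg, ← Finset.sum_neg_distrib]
    congr 1
    refine Finset.sum_congr rfl fun l _ => ?_
    rw [_root_.map_mul, FIR.conj_mkc, map_sub, map_pow, map_pow, map_inv₀, hzc, inv_inv]
    ring
  rw [hs]
  rw [map_add, hGconj]
  ring
end
end

section
/- Letm : ℤ → ℝ with m₀ := m(0) > 0, Σ_{k∈ℤ} |m_k| < 2·m₀, and let M(z) = Σ_{k∈ℤ} m_k z^{−k} (the series converges absolutely for |z| = 1). Let P : ℂ → ℂ be continuous on the unit circle {z : |z| = 1}. If Re(M(z)P(z)) > 0 for all z with |z| = 1, then there exists N ∈ ℕ such that the truncated FIR multiplier M_N(z) := Σ_{k=−N}^{N} m_k z^{−k} satisfies Σ_{k=−N}^{N} |m_k| < 2·m₀ and Re(M_N(z)P(z)) > 0 for all z with |z| = 1. -/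
open Finset

noncomputable section

/-- phase equivalence / FIR truncation: if `m : ℤ → ℝ` has `m 0 > 0`,
`Σ |m_k| < 2 m 0`, `P` is continuous on the unit circle, and
`Re(M(z) P(z)) > 0` on the unit circle, where `M(z) = Σ_{k∈ℤ} m_k z^{-k}`, then some
FIR truncation `M_N(z) = Σ_{k=-N}^{N} m_k z^{-k}` is again a Zames–Falb multiplier and
also satisfies `Re(M_N(z) P(z)) > 0` on the unit circle. -/
theorem fir_phase_substitution (m : ℤ → ℝ) (hm0 : 0 < m 0)
    (hsummable : Summable fun k : ℤ => |m k|)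
    (hl1 : (∑' k : ℤ, |m k|) < 2 * m 0)
    (P : ℂ → ℂ) (hP : ContinuousOn P {z : ℂ | ‖z‖ = 1})
    (hpos : ∀ z : ℂ, ‖z‖ = 1 →
      0 < ((∑' k : ℤ, (m k : ℂ) * z ^ (-k)) * P z).re) :
    ∃ N : ℕ,
      (∑ k ∈ Finset.Icc (-(N : ℤ)) (N : ℤ), |m k|) < 2 * m 0 ∧
      ∀ z : ℂ, ‖z‖ = 1 →
        0 < ((∑ k ∈ Finset.Icc (-(N : ℤ)) (N : ℤ), (m k : ℂ) * z ^ (-k)) * P z).re := by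
  classical
  set K : Set ℂ := {z : ℂ | ‖z‖ = 1} with hKdef
  have hKsphere : K = Metric.sphere (0 : ℂ) 1 := by
    ext z; simp [hKdef, Metric.mem_sphere, dist_zero_right]
  have hKcompact : IsCompact K := by rw [hKsphere]; exact isCompact_sphere 0 1
  have hKne : K.Nonempty := ⟨1, by simp [hKdef]⟩
  -- norm bound on the terms
  have hbound : ∀ (k : ℤ) (z : ℂ), z ∈ K → ‖(m k : ℂ) * z ^ (-k)‖ ≤ |m k| := by
    intro k z hz
    have hz1 : ‖z‖ = 1 := hz
    rw [norm_mul, norm_zpow, hz1, one_zpow, mul_one, Complex.norm_real, Real.norm_eq_abs]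
  -- uniform convergence of partial sums of M
  have hunif : TendstoUniformlyOn
      (fun t : Finset ℤ => fun z => ∑ k ∈ t, (m k : ℂ) * z ^ (-k))
      (fun z => ∑' k : ℤ, (m k : ℂ) * z ^ (-k)) Filter.atTop K :=
    tendstoUniformlyOn_tsum hsummable hbound
  -- continuity of M on K
  have hMcont : ContinuousOn (fun z => ∑' k : ℤ, (m k : ℂ) * z ^ (-k)) K := by
    apply hunif.continuousOn
    refine Filter.Eventually.frequently (Filter.Eventually.of_forall fun t => ?_)
    apply continuousOn_finset_sum
    intro k _
    apply ContinuousOn.mul continuousOn_const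
    intro z hz
    have hz0 : z ≠ 0 := by
      intro h
      have : ‖z‖ = 1 := hz
      rw [h] at this; simp at this
    exact (continuousAt_zpow₀ z (-k) (Or.inl hz0)).continuousWithinAt
  -- positive minimum of Re(M P) on K
  have hgcont : ContinuousOn (fun z => ((∑' k : ℤ, (m k : ℂ) * z ^ (-k)) * P z).re) K :=
    Complex.continuous_re.comp_continuousOn (hMcont.mul hP)
  obtain ⟨z0, hz0K, hz0min⟩ := hKcompact.exists_isMinOn hKne hgcont
  set ε : ℝ := ((∑' k : ℤ, (m k : ℂ) * z0 ^ (-k)) * P z0).re with hεdef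
  have hε : 0 < ε := hpos z0 hz0K
  -- bound on P
  obtain ⟨z1, hz1K, hz1max⟩ := hKcompact.exists_isMaxOn hKne (continuous_norm.comp_continuousOn hP)
  set C : ℝ := ‖P z1‖ + 1 with hCdef
  have hC0 : 0 < C := by positivity
  have hPC : ∀ z ∈ K, ‖P z‖ ≤ C := fun z hz => le_of_lt (lt_of_le_of_lt (hz1max hz) (lt_add_one _))
  -- tail of the series is eventually small
  have htail := (tendsto_order.1 (tendsto_tsum_compl_atTop_zero (fun k : ℤ => |m k|))).2 _
    (div_pos hε hC0)
  rw [Filter.eventually_atTop] at htail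
  obtain ⟨s, hs⟩ := htail
  -- choose N large enough
  obtain ⟨N, hN⟩ : ∃ N : ℕ, s ⊆ Finset.Icc (-(N : ℤ)) (N : ℤ) := by
    refine ⟨s.sup fun k => k.natAbs, fun k hk => ?_⟩
    have h1 : k.natAbs ≤ s.sup fun k => k.natAbs := Finset.le_sup hk
    rw [Finset.mem_Icc]
    omega
  have hst : (∑' k : { x : ℤ // x ∉ Finset.Icc (-(N : ℤ)) (N : ℤ) }, |m (k : ℤ)|) < ε / C :=
    hs _ hN
  refine ⟨N, ?_, ?_⟩
  · calc (∑ k ∈ Finset.Icc (-(N : ℤ)) (N : ℤ), |m k|) ≤ ∑' k : ℤ, |m k| :=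
        Summable.sum_le_tsum _ (fun k _ => abs_nonneg _) hsummable
      _ < 2 * m 0 := hl1
  · intro z hzK
    have hz : z ∈ K := hzK
    -- summability of the complex series at z
    have hsz : Summable fun k : ℤ => (m k : ℂ) * z ^ (-k) := by
      apply Summable.of_norm
      apply hsummable.of_nonneg_of_le (fun k => norm_nonneg _)
      intro k; exact hbound k z hz
    set T : ℂ := ∑' k : { x : ℤ // x ∉ Finset.Icc (-(N : ℤ)) (N : ℤ) }, (m (k : ℤ) : ℂ) * z ^ (-(k : ℤ)) with hTdef
    have hsplit : (∑ k ∈ Finset.Icc (-(N : ℤ)) (N : ℤ), (m k : ℂ) * z ^ (-k)) + T =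
        ∑' k : ℤ, (m k : ℂ) * z ^ (-k) :=
      Summable.sum_add_tsum_subtype_compl hsz _
    have hTnorm : ‖T‖ ≤ ∑' k : { x : ℤ // x ∉ Finset.Icc (-(N : ℤ)) (N : ℤ) }, |m (k : ℤ)| := by
      apply (norm_tsum_le_tsum_norm ((hsz.norm).subtype _)).trans
      apply Summable.tsum_le_tsum _ ((hsz.norm).subtype _) (hsummable.subtype _)
      intro k; exact hbound k z hz
    have hTsmall : ‖T‖ < ε / C := lt_of_le_of_lt hTnorm hst
    have key : (∑ k ∈ Finset.Icc (-(N : ℤ)) (N : ℤ), (m k : ℂ) * z ^ (-k)) * P z =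
        (∑' k : ℤ, (m k : ℂ) * z ^ (-k)) * P z - T * P z := by
      rw [← hsplit]; ring
    rw [key, Complex.sub_re]
    have h1 : ε ≤ ((∑' k : ℤ, (m k : ℂ) * z ^ (-k)) * P z).re := hz0min hz
    have h2 : (T * P z).re ≤ ‖T * P z‖ := Complex.re_le_norm _
    have h3 : ‖T * P z‖ < ε := by
      rw [norm_mul]
      calc ‖T‖ * ‖P z‖ ≤ ‖T‖ * C := mul_le_mul_of_nonneg_left (hPC z hz) (norm_nonneg _)
        _ < (ε / C) * C := mul_lt_mul_of_pos_right hTsmall hC0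
        _ = ε := div_mul_cancel₀ ε hC0.ne'
    linarith [h2.trans_lt h3]
end
end

section
/- Let A ∈ ℝ^{n×n}, B ∈ ℝ^{n×1}, C ∈ ℝ^{1×n}, D ∈ ℝ, P(z) = C(zI−A)^{−1}B + D, and let j ≥ 1 be an integer. Define P_{−j}(z) = C A^{j}(zI−A)^{−1}B + C A^{j−1}B + D z^{−j} + Σ_{k=1}^{j−1} C A^{k−1}B z^{−(j−k)}. Then for every z ∈ ℂ with |z| = 1 and zI−A invertible, P_{−j}(z) + conj(P_{−j}(z)) = z^{j}P(z) + conj(z^{j}P(z)); equivalently Re(P_{−j}(z)) = Re(z^{j}P(z)). -/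
open Matrix Finset

noncomputable section

/-- the causal substitute `P_{-j}` of the noncausal transfer function
`z^j P(z)` has the same real part on the unit circle:
`P_{-j}(z) + conj(P_{-j}(z)) = z^j P(z) + conj(z^j P(z))` for `|z| = 1`. -/
theorem causal_substitute_same_real_part (nn : ℕ) (j : ℕ) (hj : 1 ≤ j)
    (A : Matrix (Fin nn) (Fin nn) ℝ) (B : Matrix (Fin nn) (Fin 1) ℝ)
    (C : Matrix (Fin 1) (Fin nn) ℝ) (D : ℝ) (z : ℂ) (hz1 : ‖z‖ = 1)
    (hz : IsUnit (z • (1 : Matrix (Fin nn) (Fin nn) ℂ) - A.map Complex.ofReal))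
    (P Pmj : ℂ)
    (hP : P = ((C.map Complex.ofReal) *
        (z • (1 : Matrix (Fin nn) (Fin nn) ℂ) - A.map Complex.ofReal)⁻¹ *
        (B.map Complex.ofReal)) 0 0 + (D : ℂ))
    (hPmj : Pmj = (((C * A ^ j).map Complex.ofReal) *
          (z • (1 : Matrix (Fin nn) (Fin nn) ℂ) - A.map Complex.ofReal)⁻¹ *
          (B.map Complex.ofReal)) 0 0
        + (((C * A ^ (j - 1) * B) 0 0 : ℝ) : ℂ)
        + (D : ℂ) * z ^ (-(j : ℤ))
        + ∑ k ∈ Finset.Icc 1 (j - 1),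
            (((C * A ^ (k - 1) * B) 0 0 : ℝ) : ℂ) * z ^ (-((j : ℤ) - (k : ℤ)))) :
    Pmj + (starRingEnd ℂ) Pmj = z ^ j * P + (starRingEnd ℂ) (z ^ j * P) := by
  classical
  set A' : Matrix (Fin nn) (Fin nn) ℂ := A.map Complex.ofReal with hA'
  set B' : Matrix (Fin nn) (Fin 1) ℂ := B.map Complex.ofReal with hB'
  set C' : Matrix (Fin 1) (Fin nn) ℂ := C.map Complex.ofReal with hC'
  set S : Matrix (Fin nn) (Fin nn) ℂ := z • (1 : Matrix (Fin nn) (Fin nn) ℂ) - A' with hS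
  have hzc : (starRingEnd ℂ) z = z⁻¹ := (RCLike.inv_eq_conj hz1).symm
  have hconjz : ∀ n : ℤ, (starRingEnd ℂ) (z ^ n) = z ^ (-n) := by
    intro n
    rw [map_zpow₀, hzc]
    exact _root_.inv_zpow' z n
  -- matrix map facts
  have hmapA : ∀ m : ℕ, (A ^ m).map Complex.ofReal = A' ^ m := by
    intro m
    have := map_pow (Complex.ofRealHom.mapMatrix :
      Matrix (Fin nn) (Fin nn) ℝ →+* Matrix (Fin nn) (Fin nn) ℂ) A m
    exact this
  have hCA : ∀ m : ℕ, (C * A ^ m).map Complex.ofReal = C' * A' ^ m := by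
    intro m
    rw [show (Complex.ofReal : ℝ → ℂ) = ⇑Complex.ofRealHom from rfl,
      Matrix.map_mul (f := Complex.ofRealHom)]
    rw [← hmapA m]; rfl
  have hCAB : ∀ m : ℕ, (((C * A ^ m * B) 0 0 : ℝ) : ℂ) = (C' * A' ^ m * B') 0 0 := by
    intro m
    have h : (C * A ^ m * B).map Complex.ofReal = C' * A' ^ m * B' := by
      rw [show (Complex.ofReal : ℝ → ℂ) = ⇑Complex.ofRealHom from rfl,
        Matrix.map_mul (f := Complex.ofRealHom)]
      rw [← hCA m]; rfl
    calc (((C * A ^ m * B) 0 0 : ℝ) : ℂ) = ((C * A ^ m * B).map Complex.ofReal) 0 0 := rfl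
      _ = (C' * A' ^ m * B') 0 0 := by rw [h]
  -- invertibility
  have hdet : IsUnit S.det := (Matrix.isUnit_iff_isUnit_det S).mp hz
  have hSinv : S * S⁻¹ = 1 := Matrix.mul_nonsing_inv S hdet
  -- geometric identity
  have hcomm : Commute (z • (1 : Matrix (Fin nn) (Fin nn) ℂ)) A' := by
    unfold Commute SemiconjBy
    rw [smul_mul_assoc, mul_smul_comm, one_mul, mul_one]
  have hgeom := hcomm.geom_sum₂_mul j
  have hpow1 : ∀ i : ℕ, (z • (1 : Matrix (Fin nn) (Fin nn) ℂ)) ^ i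
      = z ^ i • (1 : Matrix (Fin nn) (Fin nn) ℂ) := by
    intro i; rw [smul_pow, one_pow]
  have hkey : A' ^ j * S⁻¹ = z ^ j • S⁻¹
      - ∑ i ∈ range j, z ^ i • A' ^ (j - 1 - i) := by
    have h1 : (∑ i ∈ range j, z ^ i • A' ^ (j - 1 - i)) * S
        = z ^ j • (1 : Matrix (Fin nn) (Fin nn) ℂ) - A' ^ j := by
      have hsumeq : (∑ i ∈ range j, z ^ i • A' ^ (j - 1 - i))
          = ∑ i ∈ range j, (z • (1 : Matrix (Fin nn) (Fin nn) ℂ)) ^ i * A' ^ (j - 1 - i) :=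
        Finset.sum_congr rfl fun i _ => by rw [hpow1 i, smul_mul_assoc, one_mul]
      rw [hsumeq, hS, ← hpow1 j]
      exact hgeom
    have h2 : A' ^ j = z ^ j • (1 : Matrix (Fin nn) (Fin nn) ℂ)
        - (∑ i ∈ range j, z ^ i • A' ^ (j - 1 - i)) * S := by
      rw [h1]; abel
    calc A' ^ j * S⁻¹
        = (z ^ j • (1 : Matrix (Fin nn) (Fin nn) ℂ)) * S⁻¹
          - (∑ i ∈ range j, z ^ i • A' ^ (j - 1 - i)) * S * S⁻¹ := by
          rw [← Matrix.sub_mul, ← h2]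
      _ = z ^ j • S⁻¹ - ∑ i ∈ range j, z ^ i • A' ^ (j - 1 - i) := by
          rw [Matrix.mul_assoc, hSinv, Matrix.mul_one, smul_mul_assoc, Matrix.one_mul]
  -- entrywise
  have hentry : (C' * A' ^ j * S⁻¹ * B') 0 0
      = z ^ j * (C' * S⁻¹ * B') 0 0
        - ∑ i ∈ range j, z ^ i * (C' * A' ^ (j - 1 - i) * B') 0 0 := by
    have hmat : C' * (A' ^ j * S⁻¹) * B'
        = z ^ j • (C' * S⁻¹ * B') - ∑ i ∈ range j, z ^ i • (C' * A' ^ (j - 1 - i) * B') := by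
      rw [hkey, Matrix.mul_sub, Matrix.sub_mul, Matrix.mul_smul, Matrix.smul_mul,
        Matrix.mul_sum, Matrix.sum_mul, Matrix.mul_assoc]
      congr 1
      refine Finset.sum_congr rfl fun i _ => ?_
      rw [Matrix.mul_smul, Matrix.smul_mul, Matrix.mul_assoc]
    have h3 : (C' * (A' ^ j * S⁻¹) * B') 0 0
        = z ^ j * (C' * S⁻¹ * B') 0 0
          - ∑ i ∈ range j, z ^ i * (C' * A' ^ (j - 1 - i) * B') 0 0 := by
      rw [hmat]
      simp [Matrix.sub_apply, Matrix.sum_apply, Matrix.smul_apply, smul_eq_mul]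
    rw [← Matrix.mul_assoc] at h3
    exact h3
  -- sum reindexing
  have hsum : ∑ i ∈ range j, z ^ i * (C' * A' ^ (j - 1 - i) * B') 0 0
      = (C' * A' ^ (j - 1) * B') 0 0
        + ∑ k ∈ Finset.Icc 1 (j - 1),
            (C' * A' ^ (k - 1) * B') 0 0 * z ^ ((j : ℤ) - (k : ℤ)) := by
    have hrefl : ∑ i ∈ range j, z ^ i * (C' * A' ^ (j - 1 - i) * B') 0 0
        = ∑ i ∈ range j, z ^ (j - 1 - i) * (C' * A' ^ i * B') 0 0 := by
      rw [← Finset.sum_range_reflect (fun i => z ^ (j - 1 - i) * (C' * A' ^ i * B') 0 0) j]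
      refine Finset.sum_congr rfl fun i hi => ?_
      have hi' : i < j := Finset.mem_range.mp hi
      have e1 : j - 1 - (j - 1 - i) = i := by omega
      rw [e1]
    rw [hrefl]
    obtain ⟨m, rfl⟩ : ∃ m, j = m + 1 := ⟨j - 1, by omega⟩
    try simp only [Nat.add_sub_cancel, Nat.succ_sub_one]
    rw [Finset.sum_range_succ, Nat.sub_self, pow_zero, one_mul, add_comm]
    congr 1
    rw [← Finset.Ico_add_one_right_eq_Icc, Finset.sum_Ico_eq_sum_range]
    try simp only [Nat.add_sub_cancel, Nat.succ_sub_one]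
    refine Finset.sum_congr rfl fun i hi => ?_
    have hi' : i < m := Finset.mem_range.mp hi
    have e2 : ((m + 1 : ℕ) : ℤ) - ((1 + i : ℕ) : ℤ) = ((m - i : ℕ) : ℤ) := by
      push_cast; omega
    rw [show 1 + i - 1 = i from by omega, e2, zpow_natCast]
    ring
  -- z^j * P
  have hzjP : z ^ j * P = (C' * A' ^ j * S⁻¹ * B') 0 0
      + (C' * A' ^ (j - 1) * B') 0 0
      + (D : ℂ) * z ^ (j : ℤ)
      + ∑ k ∈ Finset.Icc 1 (j - 1),
          (C' * A' ^ (k - 1) * B') 0 0 * z ^ ((j : ℤ) - (k : ℤ)) := by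
    rw [hP, mul_add, hentry, hsum, zpow_natCast]
    ring
  simp only [← hCAB] at hzjP
  have hconjn : (starRingEnd ℂ) (z ^ j) = z ^ (-(j : ℤ)) := by
    rw [← zpow_natCast z j, hconjz]
  rw [hPmj, hCA j, hzjP]
  simp only [map_add, _root_.map_mul, map_sum, hconjz, hconjn, Complex.conj_ofReal, neg_neg,
    neg_sub, neg_add_eq_sub, zpow_natCast]
  ring
end
end

section
/- Let A ∈ ℝ^{n×n}, B ∈ ℝ^{n×1}, C ∈ ℝ^{1×n}, D ∈ ℝ, and γ > 0. Suppose there exist μ > 0, 0 < λ < 1, and a symmetric matrix P ∈ ℝ^{n×n} such that [[AᵀPA−λP, AᵀPB],[BᵀPA, BᵀPB−μ]] ≺ 0 and [[(λ−1)P + CᵀC, CᵀD],[DᵀC, (μ−γ²) + D²]] ≺ 0 (both negative definite). Then all eigenvalues of A lie in the open unit disk and the ℓ₁-norm of the impulse response of the system satisfies |D| + Σ_{k=0}^{∞} |C A^k B| < γ. -/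
open Matrix

noncomputable section

lemma dotProduct_self_pos' {ι : Type} [Fintype ι] {v : ι → ℝ} (hv : v ≠ 0) :
    0 < v ⬝ᵥ v := by
  obtain ⟨i, hi⟩ := Function.ne_iff.mp hv
  have : v ⬝ᵥ v = ∑ j, v j * v j := rfl
  rw [this]
  exact Finset.sum_pos' (fun j _ => mul_self_nonneg _)
    ⟨i, Finset.mem_univ i, mul_self_pos.mpr hi⟩

lemma dotProduct_self_nonneg' {ι : Type} [Fintype ι] (v : ι → ℝ) : 0 ≤ v ⬝ᵥ v :=
  Finset.sum_nonneg fun j _ => mul_self_nonneg _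

lemma posdef_margin {ι : Type} [Fintype ι] [DecidableEq ι] [Nonempty ι] {M : Matrix ι ι ℝ}
    (hM : M.PosDef) : ∃ δ > 0, ∀ v : ι → ℝ, δ * (v ⬝ᵥ v) ≤ v ⬝ᵥ M *ᵥ v := by
  have hgcont : Continuous fun v : ι → ℝ => v ⬝ᵥ M *ᵥ v := by
    unfold dotProduct Matrix.mulVec
    exact continuous_finset_sum _ fun i _ => (continuous_apply i).mul
      (continuous_finset_sum _ fun j _ => (continuous_const.mul (continuous_apply j)))
  set f : EuclideanSpace ℝ ι → ℝ := fun v => (v : ι → ℝ) ⬝ᵥ M *ᵥ (v : ι → ℝ) with hf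
  have hfc : Continuous f := hgcont.comp (PiLp.continuous_ofLp (p := 2) (β := fun _ : ι => ℝ))
  have hsne : (Metric.sphere (0 : EuclideanSpace ℝ ι) 1).Nonempty :=
    NormedSpace.sphere_nonempty.mpr zero_le_one
  obtain ⟨w, hw, hwmin⟩ := (isCompact_sphere (0 : EuclideanSpace ℝ ι) 1).exists_isMinOn hsne
    hfc.continuousOn
  rw [isMinOn_iff] at hwmin
  have hwne : (w : ι → ℝ) ≠ 0 := by
    intro h
    have h1 : ‖w‖ = 1 := by simpa using hw
    rw [show w = 0 from WithLp.ofLp_injective 2 h] at h1; simp at h1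
  have hδ : 0 < f w := hM.dotProduct_mulVec_pos hwne
  refine ⟨f w, hδ, fun v => ?_⟩
  rcases eq_or_ne v 0 with rfl | hv
  · simp
  · have hvv0 : 0 < v ⬝ᵥ v := dotProduct_self_pos' hv
    set n : ℝ := Real.sqrt (v ⬝ᵥ v) with hn
    have hn0 : 0 < n := Real.sqrt_pos.mpr hvv0
    have hvv : v ⬝ᵥ v = n * n := (Real.mul_self_sqrt hvv0.le).symm
    have hsum : ∑ i, v i * v i = n * n := hvv
    set vE : EuclideanSpace ℝ ι := (WithLp.equiv 2 (ι → ℝ)).symm v with hvE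
    have hmem : (n⁻¹ • vE) ∈ Metric.sphere (0 : EuclideanSpace ℝ ι) 1 := by
      rw [Metric.mem_sphere, dist_zero_right, EuclideanSpace.norm_eq]
      have : ∀ i, ‖(n⁻¹ • vE) i‖ ^ 2 = n⁻¹ * n⁻¹ * (v i * v i) := by
        intro i
        have h0 : (n⁻¹ • vE) i = n⁻¹ * v i := by
          rw [hvE]; rfl
        rw [h0, Real.norm_eq_abs, sq_abs]; ring
      rw [Finset.sum_congr rfl fun i _ => this i, ← Finset.mul_sum, hsum]
      rw [show n⁻¹ * n⁻¹ * (n * n) = 1 by field_simp]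
      exact Real.sqrt_one
    have hkey := hwmin _ hmem
    have hexp : f (n⁻¹ • vE) = n⁻¹ * n⁻¹ * (v ⬝ᵥ M *ᵥ v) := by
      have h1 : ∀ x : EuclideanSpace ℝ ι,
          f x = (WithLp.equiv 2 (ι → ℝ) x) ⬝ᵥ M *ᵥ (WithLp.equiv 2 (ι → ℝ) x) := fun _ => rfl
      show (n⁻¹ • v) ⬝ᵥ M *ᵥ (n⁻¹ • v) = _
      rw [Matrix.mulVec_smul, smul_dotProduct, dotProduct_smul]
      simp [smul_smul, mul_assoc]
    rw [hexp] at hkey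
    rw [hvv]
    calc f w * (n * n) = n * n * f w := by ring
    _ ≤ n * n * (n⁻¹ * n⁻¹ * (v ⬝ᵥ M *ᵥ v)) :=
        mul_le_mul_of_nonneg_left hkey (le_of_lt (mul_pos hn0 hn0))
    _ = v ⬝ᵥ M *ᵥ v := by field_simp

lemma dot_transpose' {m n : Type} [Fintype m] [Fintype n] (X : Matrix m n ℝ) (x : n → ℝ)
    (w : m → ℝ) : x ⬝ᵥ (Xᵀ *ᵥ w) = (X *ᵥ x) ⬝ᵥ w := by
  rw [Matrix.dotProduct_mulVec, Matrix.vecMul_transpose]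

lemma dot_triple' {n p q : Type} [Fintype n] [Fintype p] [Fintype q] (P : Matrix n n ℝ)
    (X : Matrix n p ℝ) (Y : Matrix n q ℝ) (x : p → ℝ) (z : q → ℝ) :
    x ⬝ᵥ ((Xᵀ * P * Y) *ᵥ z) = (X *ᵥ x) ⬝ᵥ (P *ᵥ (Y *ᵥ z)) := by
  rw [Matrix.mul_assoc, ← Matrix.mulVec_mulVec, ← Matrix.mulVec_mulVec, dot_transpose']

lemma dotProduct_sum' {ι κ : Type} [Fintype ι] (v : ι → ℝ) (s : Finset κ) (f : κ → ι → ℝ) :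
    v ⬝ᵥ (∑ i ∈ s, f i) = ∑ i ∈ s, v ⬝ᵥ f i := by
  unfold dotProduct
  simp only [Finset.sum_apply, Finset.mul_sum]
  exact Finset.sum_comm

lemma mulVec_sum' {ι κ : Type} [Fintype ι] {m : Type} [Fintype m]
    (M : Matrix m ι ℝ) (s : Finset κ) (f : κ → ι → ℝ) :
    M *ᵥ (∑ i ∈ s, f i) = ∑ i ∈ s, M *ᵥ f i := by
  classical
  induction s using Finset.cons_induction with
  | empty => simp
  | cons a s ha ih => rw [Finset.sum_cons, Matrix.mulVec_add, ih, Finset.sum_cons]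

def stSeq {n : ℕ} (A : Matrix (Fin n) (Fin n) ℝ) (b : Fin n → ℝ) (u : ℕ → ℝ) :
    ℕ → (Fin n → ℝ)
  | 0 => 0
  | k + 1 => A *ᵥ stSeq A b u k + u k • b

lemma stSeq_eq {n : ℕ} (A : Matrix (Fin n) (Fin n) ℝ) (b : Fin n → ℝ) (u : ℕ → ℝ) (k : ℕ) :
    stSeq A b u k = ∑ i ∈ Finset.range k, u (k - 1 - i) • ((A ^ i) *ᵥ b) := by
  induction k with
  | zero => simp [stSeq]
  | succ k ih =>
    rw [Finset.sum_range_succ']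
    show A *ᵥ stSeq A b u k + u k • b = _
    rw [ih, mulVec_sum']
    congr 1
    · apply Finset.sum_congr rfl
      intro i _
      rw [Matrix.mulVec_smul, Matrix.mulVec_mulVec, ← pow_succ']
      congr 2
      omega
    · simp

/-- sign function with `sg 0 = 1`, so that `|sg t| = 1` always. -/
def sg (t : ℝ) : ℝ := if t < 0 then -1 else 1

lemma sg_mul (t : ℝ) : sg t * t = |t| := by
  unfold sg
  split
  · rw [abs_of_neg ‹_›]; ring
  · rw [abs_of_nonneg (not_lt.mp ‹_›)]; ring

lemma sg_sq (t : ℝ) : sg t ^ 2 = 1 := by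
  unfold sg; split <;> norm_num

/-- ℓ₁-norm bound, Lemma 2 / Rieber et al.: if there exist `μ > 0`,
`0 < λ < 1` and symmetric `P` satisfying the two LMIs, then `A` is Schur stable and
the ℓ₁ norm of the impulse response, `|D| + Σ_{k≥0} |C A^k B|`, is less than `γ`. -/
theorem l1_norm_bound_lmi (nn : ℕ)
    (A : Matrix (Fin nn) (Fin nn) ℝ) (B : Matrix (Fin nn) (Fin 1) ℝ)
    (C : Matrix (Fin 1) (Fin nn) ℝ) (D : ℝ) (γ : ℝ) (hγ : 0 < γ)
    (μ lam : ℝ) (hμ : 0 < μ) (hlam0 : 0 < lam) (hlam1 : lam < 1)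
    (P : Matrix (Fin nn) (Fin nn) ℝ) (hPsymm : Pᵀ = P)
    (h1 : NegDef (Matrix.fromBlocks (Aᵀ * P * A - lam • P) (Aᵀ * P * B)
        (Bᵀ * P * A) (Bᵀ * P * B - μ • (1 : Matrix (Fin 1) (Fin 1) ℝ))))
    (h2 : NegDef (Matrix.fromBlocks ((lam - 1) • P + Cᵀ * C) (D • Cᵀ)
        (D • C) ((μ - γ ^ 2 + D ^ 2) • (1 : Matrix (Fin 1) (Fin 1) ℝ)))) :
    SpecInUnitDisk A ∧
      Summable (fun k : ℕ => |(C * A ^ k * B) 0 0|) ∧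
      |D| + (∑' k : ℕ, |(C * A ^ k * B) 0 0|) < γ := by
  set b : Fin nn → ℝ := fun i => B i 0 with hb
  set c : Fin nn → ℝ := C 0 with hc
  set q : (Fin nn → ℝ) → ℝ := fun x => x ⬝ᵥ P *ᵥ x with hq
  have fin1_dot : ∀ f g : Fin 1 → ℝ, f ⬝ᵥ g = f 0 * g 0 := by
    intro f g; simp [dotProduct]
  have hCx : ∀ (x : Fin nn → ℝ) (j : Fin 1), (C *ᵥ x) j = c ⬝ᵥ x := by
    intro x j; rw [Subsingleton.elim j 0]; rfl
  have hBy : ∀ t : ℝ, B *ᵥ (fun _ : Fin 1 => t) = t • b := by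
    intro t; funext i
    show (fun j => B i j) ⬝ᵥ _ = _
    simp [dotProduct, hb, mul_comm]
  have hq1 : ∀ (x : Fin nn → ℝ) (t : ℝ),
      (Sum.elim x (fun _ : Fin 1 => t)) ⬝ᵥ
        ((Matrix.fromBlocks (Aᵀ * P * A - lam • P) (Aᵀ * P * B)
          (Bᵀ * P * A) (Bᵀ * P * B - μ • (1 : Matrix (Fin 1) (Fin 1) ℝ))) *ᵥ
          (Sum.elim x (fun _ : Fin 1 => t))) =
      q (A *ᵥ x + t • b) - lam * q x - μ * t ^ 2 := by
    intro x t
    set y : Fin 1 → ℝ := fun _ => t with hy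
    rw [Matrix.fromBlocks_mulVec, sumElim_dotProduct_sumElim]
    rw [Sum.elim_comp_inl, Sum.elim_comp_inr]
    rw [dotProduct_add, dotProduct_add]
    rw [Matrix.sub_mulVec, dotProduct_sub]
    rw [Matrix.sub_mulVec, dotProduct_sub]
    rw [dot_triple', dot_triple', dot_triple', dot_triple']
    rw [Matrix.smul_mulVec, dotProduct_smul]
    rw [Matrix.smul_mulVec, Matrix.one_mulVec, dotProduct_smul]
    rw [hBy t]
    rw [fin1_dot y y]
    have : q (A *ᵥ x + t • b) = (A *ᵥ x) ⬝ᵥ (P *ᵥ (A *ᵥ x)) + (A *ᵥ x) ⬝ᵥ (P *ᵥ (t • b))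
        + (t • b) ⬝ᵥ (P *ᵥ (A *ᵥ x)) + (t • b) ⬝ᵥ (P *ᵥ (t • b)) := by
      show (A *ᵥ x + t • b) ⬝ᵥ (P *ᵥ (A *ᵥ x + t • b)) = _
      rw [Matrix.mulVec_add, dotProduct_add, add_dotProduct,
        add_dotProduct]
      ring
    rw [this]
    show _ = _ - lam * (x ⬝ᵥ P *ᵥ x) - μ * t ^ 2
    have hy0 : y 0 = t := rfl
    rw [hy0]
    simp only [smul_eq_mul]
    ring
  have hq2 : ∀ (x : Fin nn → ℝ) (t : ℝ),
      (Sum.elim x (fun _ : Fin 1 => t)) ⬝ᵥ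
        ((Matrix.fromBlocks ((lam - 1) • P + Cᵀ * C) (D • Cᵀ)
          (D • C) ((μ - γ ^ 2 + D ^ 2) • (1 : Matrix (Fin 1) (Fin 1) ℝ))) *ᵥ
          (Sum.elim x (fun _ : Fin 1 => t))) =
      (lam - 1) * q x + (c ⬝ᵥ x + D * t) ^ 2 + (μ - γ ^ 2) * t ^ 2 := by
    intro x t
    set y : Fin 1 → ℝ := fun _ => t with hy
    rw [Matrix.fromBlocks_mulVec, sumElim_dotProduct_sumElim]
    rw [Sum.elim_comp_inl, Sum.elim_comp_inr]
    rw [dotProduct_add, dotProduct_add]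
    rw [Matrix.add_mulVec, dotProduct_add]
    rw [Matrix.smul_mulVec, dotProduct_smul]
    rw [← Matrix.mulVec_mulVec, dot_transpose']
    rw [Matrix.smul_mulVec, dotProduct_smul, dot_transpose']
    rw [Matrix.smul_mulVec, dotProduct_smul]
    rw [Matrix.smul_mulVec, Matrix.one_mulVec, dotProduct_smul]
    rw [fin1_dot ((C *ᵥ x)) ((C *ᵥ x)), fin1_dot (C *ᵥ x) y, fin1_dot y (C *ᵥ x),
      fin1_dot y y]
    rw [hCx x 0]
    have hy0 : y 0 = t := rfl
    rw [hy0]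
    simp only [hq, smul_eq_mul]
    ring
  -- margins
  have h1' : (-(Matrix.fromBlocks (Aᵀ * P * A - lam • P) (Aᵀ * P * B)
        (Bᵀ * P * A) (Bᵀ * P * B - μ • (1 : Matrix (Fin 1) (Fin 1) ℝ)))).PosDef := h1
  have h2' : (-(Matrix.fromBlocks ((lam - 1) • P + Cᵀ * C) (D • Cᵀ)
        (D • C) ((μ - γ ^ 2 + D ^ 2) • (1 : Matrix (Fin 1) (Fin 1) ℝ)))).PosDef := h2
  obtain ⟨δ1, hδ1pos, hδ1⟩ := posdef_margin h1'
  obtain ⟨δ, hδpos, hδ2⟩ := posdef_margin h2'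
  have helim_dot : ∀ (x : Fin nn → ℝ) (t : ℝ),
      (Sum.elim x (fun _ : Fin 1 => t)) ⬝ᵥ (Sum.elim x (fun _ : Fin 1 => t))
        = x ⬝ᵥ x + t ^ 2 := by
    intro x t
    rw [sumElim_dotProduct_sumElim, fin1_dot]
    ring
  have key1 : ∀ (x : Fin nn → ℝ) (t : ℝ),
      q (A *ᵥ x + t • b) ≤ lam * q x + μ * t ^ 2 := by
    intro x t
    have h := hδ1 (Sum.elim x fun _ => t)
    rw [Matrix.neg_mulVec, dotProduct_neg, hq1, helim_dot] at h
    have h0 : 0 ≤ δ1 * (x ⬝ᵥ x + t ^ 2) := by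
      have := dotProduct_self_nonneg' x
      have := sq_nonneg t
      positivity
    linarith
  have key2 : ∀ (x : Fin nn → ℝ) (t : ℝ),
      (lam - 1) * q x + (c ⬝ᵥ x + D * t) ^ 2 + (μ - γ ^ 2) * t ^ 2
        ≤ -(δ * (x ⬝ᵥ x + t ^ 2)) := by
    intro x t
    have h := hδ2 (Sum.elim x fun _ => t)
    rw [Matrix.neg_mulVec, dotProduct_neg, hq2, helim_dot] at h
    linarith
  -- P is positive definite
  have Ppos : ∀ x : Fin nn → ℝ, x ≠ 0 → 0 < q x := by
    intro x hx
    have h := key2 x 0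
    have hxx := dotProduct_self_pos' hx
    nlinarith [sq_nonneg (c ⬝ᵥ x + D * 0)]
  have qnonneg : ∀ x : Fin nn → ℝ, 0 ≤ q x := by
    intro x
    rcases eq_or_ne x 0 with rfl | hx
    · simp [hq]
    · exact (Ppos x hx).le
  have qA : ∀ x : Fin nn → ℝ, q (A *ᵥ x) ≤ lam * q x := by
    intro x
    have h := key1 x 0
    simpa using h
  have strict1 : ∀ x : Fin nn → ℝ, x ≠ 0 → q (A *ᵥ x) < lam * q x := by
    intro x hx
    have hv : (Sum.elim x (fun _ : Fin 1 => (0:ℝ))) ≠ 0 := by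
      intro h
      exact hx (funext fun i => congrFun h (Sum.inl i))
    have h := h1'.dotProduct_mulVec_pos hv
    have hst : star (Sum.elim x (fun _ : Fin 1 => (0:ℝ))) = Sum.elim x (fun _ : Fin 1 => (0:ℝ)) :=
      star_trivial _
    rw [hst, Matrix.neg_mulVec, dotProduct_neg, hq1] at h
    have h0 : A *ᵥ x + (0:ℝ) • b = A *ᵥ x := by simp
    rw [h0] at h
    nlinarith
  have hBsym : ∀ w1 w2 : Fin nn → ℝ, w1 ⬝ᵥ P *ᵥ w2 = w2 ⬝ᵥ P *ᵥ w1 := by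
    intro w1 w2
    have h1'' : w1 ⬝ᵥ P *ᵥ w2 = (P *ᵥ w1) ⬝ᵥ w2 := by
      conv_lhs => rw [← hPsymm]
      rw [dot_transpose']
    rw [h1'', dotProduct_comm]
  have e1 : ∀ (α β : ℝ) (w1 w2 : Fin nn → ℝ),
      q (α • w1 + β • w2) = α ^ 2 * q w1 + 2 * α * β * (w1 ⬝ᵥ P *ᵥ w2) + β ^ 2 * q w2 := by
    intro α β w1 w2
    show (α • w1 + β • w2) ⬝ᵥ P *ᵥ (α • w1 + β • w2) = _
    rw [Matrix.mulVec_add, dotProduct_add, add_dotProduct, add_dotProduct]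
    simp only [Matrix.mulVec_smul, smul_dotProduct, dotProduct_smul, smul_eq_mul, hq]
    rw [show w2 ⬝ᵥ P *ᵥ w1 = w1 ⬝ᵥ P *ᵥ w2 from hBsym w2 w1]
    ring
  have hspec : SpecInUnitDisk A := by
    intro z hz
    rw [spectrum.mem_iff, Matrix.isUnit_iff_isUnit_det, isUnit_iff_ne_zero, not_not] at hz
    obtain ⟨v, hv0, hveq⟩ := Matrix.exists_mulVec_eq_zero_iff.mpr hz
    have hAv : (A.map Complex.ofReal) *ᵥ v = z • v := by
      rw [Matrix.sub_mulVec] at hveq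
      have halg : (algebraMap ℂ (Matrix (Fin nn) (Fin nn) ℂ) z) *ᵥ v = z • v := by
        rw [Algebra.algebraMap_eq_smul_one, Matrix.smul_mulVec, Matrix.one_mulVec]
      rw [halg] at hveq
      exact (sub_eq_zero.mp hveq).symm
    set a : Fin nn → ℝ := fun i => (v i).re with ha
    set bb : Fin nn → ℝ := fun i => (v i).im with hbb
    set r : ℝ := z.re with hr
    set s : ℝ := z.im with hs
    have hcomp : ∀ j, ∑ i, (A j i : ℂ) * v i = z * v j := by
      intro j
      have h := congrFun hAv j
      exact h
    have hAa : A *ᵥ a = r • a - s • bb := by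
      funext j
      have h := congrArg Complex.re (hcomp j)
      rw [Complex.re_sum] at h
      have hl : ∀ i, ((A j i : ℂ) * v i).re = A j i * a i := by
        intro i; simp [Complex.mul_re, ha]
      rw [Finset.sum_congr rfl fun i _ => hl i] at h
      have hrr : (z * v j).re = r * a j - s * bb j := by
        simp [Complex.mul_re, hr, hs, ha, hbb]
      rw [hrr] at h
      exact h
    have hAb : A *ᵥ bb = s • a + r • bb := by
      funext j
      have h := congrArg Complex.im (hcomp j)
      rw [Complex.im_sum] at h
      have hl : ∀ i, ((A j i : ℂ) * v i).im = A j i * bb i := by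
        intro i; simp [Complex.mul_im, hbb]
      rw [Finset.sum_congr rfl fun i _ => hl i] at h
      have hrr : (z * v j).im = s * a j + r * bb j := by
        simp [Complex.mul_im, hr, hs, ha, hbb]; ring
      rw [hrr] at h
      exact h
    have hqsum : q (A *ᵥ a) + q (A *ᵥ bb) = (r ^ 2 + s ^ 2) * (q a + q bb) := by
      have h1a : A *ᵥ a = r • a + (-s) • bb := by rw [hAa, neg_smul, ← sub_eq_add_neg]
      rw [h1a, hAb, e1 r (-s) a bb, e1 s r a bb]
      ring
    have habne : a ≠ 0 ∨ bb ≠ 0 := by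
      by_contra h
      push_neg at h
      apply hv0
      funext i
      have h1a := congrFun h.1 i
      have h2a := congrFun h.2 i
      exact Complex.ext h1a h2a
    have hQpos : 0 < q a + q bb := by
      rcases habne with h | h
      · have := Ppos a h; have := qnonneg bb; linarith
      · have := Ppos bb h; have := qnonneg a; linarith
    have hstrict : q (A *ᵥ a) + q (A *ᵥ bb) < lam * (q a + q bb) := by
      rcases habne with h | h
      · have := strict1 a h; have := qA bb; linarith
      · have := strict1 bb h; have := qA a; linarith
    rw [hqsum] at hstrict
    have hrs : r ^ 2 + s ^ 2 < lam := lt_of_mul_lt_mul_right (by linarith) hQpos.le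
    have hnz : ‖z‖ ^ 2 = r ^ 2 + s ^ 2 := by
      rw [Complex.sq_norm, Complex.normSq_apply]
      simp [hr, hs]
      ring
    nlinarith [norm_nonneg z]
  -- impulse response
  set h : ℕ → ℝ := fun k => c ⬝ᵥ ((A ^ k) *ᵥ b) with hh
  have hentry : ∀ k, (C * A ^ k * B) 0 0 = h k := by
    intro k
    rw [Matrix.mul_assoc]
    rw [Matrix.mul_apply]
    apply Finset.sum_congr rfl
    intro j _
    rw [Matrix.mul_apply]
    rfl
  have h1l : (1:ℝ) - lam ≠ 0 := by linarith
  set m : ℝ := μ / (1 - lam) with hm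
  have hm0 : 0 < m := div_pos hμ (by linarith)
  have hq0 : q (0 : Fin nn → ℝ) = 0 := by simp [hq]
  have hmain : ∀ N : ℕ, |D| + ∑ i ∈ Finset.range N, |h i| ≤ Real.sqrt (γ ^ 2 - δ) := by
    intro N
    set u : ℕ → ℝ := fun j => if j = N then sg D else sg (h (N - 1 - j)) with hu
    have husq : ∀ j, u j ^ 2 = 1 := by
      intro j; rw [hu]; dsimp only; split <;> exact sg_sq _
    have hlyap : ∀ k, q (stSeq A b u k) ≤ m := by
      intro k
      induction k with
      | zero => show q 0 ≤ m; rw [hq0]; linarith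
      | succ k ih =>
        show q (A *ᵥ stSeq A b u k + u k • b) ≤ m
        have hk := key1 (stSeq A b u k) (u k)
        rw [husq k] at hk
        have hml : lam * q (stSeq A b u k) ≤ lam * m := mul_le_mul_of_nonneg_left ih hlam0.le
        have heq : lam * m + μ = m := by rw [hm]; field_simp; ring
        linarith
    have hxN : c ⬝ᵥ stSeq A b u N = ∑ i ∈ Finset.range N, |h i| := by
      rw [stSeq_eq, dotProduct_sum']
      apply Finset.sum_congr rfl
      intro i hi
      rw [Finset.mem_range] at hi
      rw [dotProduct_smul, smul_eq_mul]
      have h1u : u (N - 1 - i) = sg (h i) := by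
        rw [hu]; dsimp only
        rw [if_neg (by omega), show N - 1 - (N - 1 - i) = i by omega]
      rw [h1u]
      exact sg_mul (h i)
    have huN : u N = sg D := by rw [hu]; simp
    set S : ℝ := |D| + ∑ i ∈ Finset.range N, |h i| with hS
    have hSnonneg : 0 ≤ S := by
      rw [hS]
      have : (0:ℝ) ≤ ∑ i ∈ Finset.range N, |h i| :=
        Finset.sum_nonneg fun i _ => abs_nonneg _
      have := abs_nonneg D
      linarith
    have hSc : c ⬝ᵥ stSeq A b u N + D * u N = S := by
      rw [hxN, huN, hS, mul_comm, sg_mul]; ring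
    have hkey := key2 (stSeq A b u N) (u N)
    rw [hSc, husq N] at hkey
    have hxx := dotProduct_self_nonneg' (stSeq A b u N)
    have hlyapN := hlyap N
    have heq : (1 - lam) * m = μ := by rw [hm]; field_simp
    have hS2 : S ^ 2 ≤ γ ^ 2 - δ := by nlinarith
    calc S = Real.sqrt (S ^ 2) := (Real.sqrt_sq hSnonneg).symm
    _ ≤ Real.sqrt (γ ^ 2 - δ) := Real.sqrt_le_sqrt hS2
  have h0 : 0 ≤ γ ^ 2 - δ := by
    have hk0 := key2 0 1
    rw [hq0] at hk0
    have hz1 : c ⬝ᵥ (0 : Fin nn → ℝ) = 0 := dotProduct_zero c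
    have hz2 : (0 : Fin nn → ℝ) ⬝ᵥ 0 = 0 := dotProduct_zero 0
    rw [hz1, hz2] at hk0
    nlinarith [sq_nonneg D]
  have hCb_lt : Real.sqrt (γ ^ 2 - δ) < γ := by
    calc Real.sqrt (γ ^ 2 - δ) < Real.sqrt (γ ^ 2) := Real.sqrt_lt_sqrt h0 (by linarith)
    _ = γ := Real.sqrt_sq hγ.le
  have habs : (fun k : ℕ => |(C * A ^ k * B) 0 0|) = fun k => |h k| :=
    funext fun k => by rw [hentry k]
  have hsumle : ∀ N, ∑ i ∈ Finset.range N, |h i| ≤ Real.sqrt (γ ^ 2 - δ) - |D| := by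
    intro N; have := hmain N; linarith
  have hsummable : Summable fun k => |h k| :=
    summable_of_sum_range_le (fun k => abs_nonneg _) hsumle
  have htsum : ∑' k, |h k| ≤ Real.sqrt (γ ^ 2 - δ) - |D| :=
    Summable.tsum_le_of_sum_range_le hsummable hsumle
  refine ⟨hspec, ?_, ?_⟩
  · rw [habs]; exact hsummable
  · have hts : ∑' k : ℕ, |(C * A ^ k * B) 0 0| = ∑' k, |h k| := by rw [habs]
    rw [hts]
    linarith
end
end
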